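/- arXiv:0801.4404 — 10 statements merged into one kernel-verified Lean document; each statement's English description precedes it below -/
import Mathlib

section
/- The number of integer partitions of n with at most k parts is asymptotically equivalent to n^(k-1)/((k-1)! · k!) as n tends to infinity. -/
/-!
Sorting identifies partitions of `n` into at most `k` parts with monotone `k`-tuples of naturals
summing to `n`. Every `k`-tuple is a permutation of a monotone one, so `k! p_k(n)` is at least the
number `C(n+k-1, k-1)` of all `k`-tuples summing to `n`. Conversely, adding `(0, 1, …, k-1)` makes
a monotone tuple strictly monotone with sum `n + k(k-1)/2`, and the `k!` permutations of a strictly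
monotone tuple are distinct, so `k! p_k(n) ≤ C(n + k(k-1)/2 + k-1, k-1)`. Both binomial
coefficients are `~ n^(k-1)/(k-1)!`.
-/

open Filter Finset Finset.Nat Topology
open scoped Nat

theorem Finset.Nat.card_antidiagonalTuple_succ (k n : ℕ) :
    #(antidiagonalTuple (k + 1) n) = (n + k).choose k := by
  have e : Sym (Fin (k + 1)) n ≃ antidiagonalTuple (k + 1) n :=
    (Sym.equivNatSumOfFintype (Fin (k + 1)) n).trans
      (Equiv.subtypeEquivRight fun _ => mem_antidiagonalTuple.symm)
  rw [← Fintype.card_coe, ← Fintype.card_congr e, Sym.card_sym_eq_choose, Fintype.card_fin,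
    show k + 1 + n - 1 = n + k by omega, Nat.choose_symm_add]

theorem Finset.Nat.comp_perm_mem_antidiagonalTuple {k n : ℕ} :
    ∀ f ∈ antidiagonalTuple k n, ∀ σ : Equiv.Perm (Fin k), f ∘ σ ∈ antidiagonalTuple k n :=
  fun f hf σ => by simpa [mem_antidiagonalTuple, Equiv.sum_comp σ f] using hf

theorem tendsto_add_choose_mul_factorial_div_pow (a j : ℕ) :
    Tendsto (fun n : ℕ => ((n + a).choose j : ℝ) * j ! / (n : ℝ) ^ j) atTop (𝓝 1) := by
  have hprod : Tendsto (fun n : ℕ => ∏ i ∈ range j, (1 + ((a : ℝ) - i) / n)) atTop (𝓝 1) := by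
    simpa using tendsto_finsetProd (range j) fun i _ =>
      (tendsto_const_div_atTop_nhds_zero_nat ((a : ℝ) - i)).const_add 1
  refine hprod.congr' ?_
  filter_upwards [eventually_ge_atTop j, eventually_gt_atTop 0] with n hjn hn
  rw [mul_comm, ← Nat.cast_mul, ← Nat.descFactorial_eq_factorial_mul_choose,
    Nat.descFactorial_eq_prod_range, Nat.cast_prod,
    show (n : ℝ) ^ j = ∏ _i ∈ range j, (n : ℝ) by simp, ← prod_div_distrib]
  refine prod_congr rfl fun i hi => ?_
  rw [Nat.cast_sub (by grind), Nat.cast_add]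
  field_simp
  ring

section Permutations

variable {α : Type*} [LinearOrder α] {k : ℕ} {s : Finset (Fin k → α)}

theorem card_le_factorial_mul_card_filter_monotone
    (hs : ∀ f ∈ s, ∀ σ : Equiv.Perm (Fin k), f ∘ σ ∈ s) :
    #s ≤ k ! * #{f ∈ s | Monotone f} := by
  classical
  calc #s ≤ #((univ ×ˢ {f ∈ s | Monotone f}).image
        fun x : Equiv.Perm (Fin k) × _ => x.2 ∘ x.1) := by
        refine card_le_card fun f hf =>
          mem_image.2 ⟨((Tuple.sort f).symm, f ∘ Tuple.sort f), ?_, ?_⟩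
        · simpa using ⟨hs f hf _, Tuple.monotone_sort f⟩
        · ext i; simp
    _ ≤ #(univ ×ˢ {f ∈ s | Monotone f}) := card_image_le
    _ = k ! * #{f ∈ s | Monotone f} := by
        rw [card_product, Finset.card_univ, Fintype.card_perm, Fintype.card_fin]

theorem factorial_mul_card_filter_strictMono_le_card
    (hs : ∀ f ∈ s, ∀ σ : Equiv.Perm (Fin k), f ∘ σ ∈ s) :
    k ! * #{f ∈ s | StrictMono f} ≤ #s := by
  classical
  calc k ! * #{f ∈ s | StrictMono f} =
      #((univ : Finset (Equiv.Perm (Fin k))) ×ˢ {f ∈ s | StrictMono f}) := by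
        rw [card_product, Finset.card_univ, Fintype.card_perm, Fintype.card_fin]
    _ ≤ #s := by
      refine card_le_card_of_injOn (fun x : Equiv.Perm (Fin k) × _ => x.2 ∘ x.1)
        (fun x hx => ?_) ?_
      · simp only [coe_product, Set.mem_prod, coe_filter, Set.mem_ofPred_eq] at hx
        exact hs _ hx.2.1 _
      · rintro ⟨σ, f⟩ hx ⟨τ, g⟩ hy hfg
        simp only [coe_product, Set.mem_prod, coe_filter, Set.mem_ofPred_eq] at hx hy
        have hπ : ∀ i, f i = g (τ (σ.symm i)) := fun i => by
          simpa using congrFun hfg (σ.symm i)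
        have hmono : Monotone (σ.symm.trans τ) := fun i j hij =>
          hy.2.2.le_iff_le.1 (by simpa [← hπ] using hx.2.2.monotone hij)
        have hid : ∀ i, τ (σ.symm i) = i := fun i => by
          simpa using congr($((Equiv.Perm.monotone_iff _).1 hmono) i)
        have hστ : σ = τ := Equiv.ext fun i => by simpa using (hid (σ i)).symm
        subst hστ
        exact Prod.ext rfl (funext fun i => by simpa using hπ i)

end Permutations

theorem eq_of_monotone_of_map_univ_eq {α : Type*} [LinearOrder α] {k : ℕ} {f g : Fin k → α}
    (hf : Monotone f) (hg : Monotone g) (h : univ.val.map f = univ.val.map g) : f = g := by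
  rw [Fin.univ_val_map, Fin.univ_val_map, Multiset.coe_eq_coe] at h
  exact List.ofFn_injective (h.eq_of_sortedLE hf.sortedLE_ofFn hg.sortedLE_ofFn)

namespace Multiset

def sortedTuple (M : Multiset ℕ) (k : ℕ) : Fin k → ℕ := fun i => (M.sort (· ≤ ·)).getD i 0

variable {M : Multiset ℕ} {k : ℕ}

theorem ofFn_sortedTuple (h : card M = k) : List.ofFn (M.sortedTuple k) = M.sort (· ≤ ·) := by
  refine List.ext_getElem (by simp [h]) fun i _ hi => ?_
  simp [sortedTuple, List.getElem?_eq_getElem hi]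

theorem map_univ_sortedTuple (h : card M = k) : univ.val.map (M.sortedTuple k) = M := by
  rw [Fin.univ_val_map, ofFn_sortedTuple h, sort_eq]

theorem monotone_sortedTuple (h : card M = k) : Monotone (M.sortedTuple k) := by
  rw [← List.sortedLE_ofFn_iff, ofFn_sortedTuple h]
  exact (pairwise_sort M _).sortedLE

end Multiset

namespace Nat.Partition

variable {n k : ℕ}

def padded (k : ℕ) (p : n.Partition) : Multiset ℕ :=
  p.parts + Multiset.replicate (k - p.parts.card) 0

theorem card_padded {p : n.Partition} (h : p.parts.card ≤ k) : (p.padded k).card = k := by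
  simp [padded]; omega

theorem sum_padded (p : n.Partition) : (p.padded k).sum = n := by
  simp [padded, p.parts_sum]

theorem ofSums_padded (p : n.Partition) : ofSums n (p.padded k) p.sum_padded = p := by
  ext1
  simp only [ofSums_parts, padded, Multiset.filter_add]
  rw [Multiset.filter_eq_self.2 fun a ha => (p.parts_pos ha).ne',
    Multiset.filter_eq_nil.2 fun a ha => by simp [Multiset.eq_of_mem_replicate ha], add_zero]

theorem padded_ofSums {M : Multiset ℕ} (hM : M.sum = n) (hk : M.card = k) :
    (ofSums n M hM).padded k = M := by
  have hsplit := Multiset.filter_add_not (· ≠ 0) M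
  have hzeros : M.filter (¬ · ≠ 0) = Multiset.replicate (M.filter (¬ · ≠ 0)).card 0 :=
    Multiset.eq_replicate_card.2 fun a ha => by simpa using Multiset.of_mem_filter ha
  have hcard := congrArg Multiset.card hsplit
  rw [Multiset.card_add] at hcard
  rw [padded, ofSums_parts]
  conv_rhs => rw [← hsplit, hzeros]
  congr 2
  omega

end Nat.Partition

open Nat.Partition in
theorem card_partitions_parts_le_eq_card_monotone (k n : ℕ) :
    #{p : n.Partition | p.parts.card ≤ k} = #{f ∈ antidiagonalTuple k n | Monotone f} := by
  refine card_bij' (fun p _ => (p.padded k).sortedTuple k)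
    (fun f hf => ofSums n (univ.val.map f)
      (by rw [← sum_eq_multiset_sum]; exact mem_antidiagonalTuple.1 (mem_filter.1 hf).1))
    (fun p hp => ?_) (fun f hf => ?_) (fun p hp => ?_) (fun f hf => ?_)
  · have hk := card_padded (mem_filter.1 hp).2
    refine mem_filter.2 ⟨mem_antidiagonalTuple.2 ?_, Multiset.monotone_sortedTuple hk⟩
    rw [sum_eq_multiset_sum, Multiset.map_univ_sortedTuple hk, sum_padded]
  · refine mem_filter.2 ⟨mem_univ _, ?_⟩
    rw [ofSums_parts]
    exact (Multiset.card_le_card (Multiset.filter_le _ _)).trans_eq (by simp)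
  · simp only [Multiset.map_univ_sortedTuple (card_padded (mem_filter.1 hp).2), ofSums_padded]
  · obtain ⟨-, hmono⟩ := mem_filter.1 hf
    refine eq_of_monotone_of_map_univ_eq (Multiset.monotone_sortedTuple ?_) hmono ?_
    all_goals rw [padded_ofSums _ (by simp)]
    · simp
    · exact Multiset.map_univ_sortedTuple (by simp)

theorem card_monotone_le_card_strictMono (k n : ℕ) :
    #{f ∈ antidiagonalTuple k n | Monotone f} ≤
      #{f ∈ antidiagonalTuple k (n + ∑ i : Fin k, (i : ℕ)) | StrictMono f} := by
  refine card_le_card_of_injOn (fun f i => f i + i) (fun f hf => ?_)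
    fun f _ g _ hfg => funext fun i => by simpa using congrFun hfg i
  simp only [coe_filter, Set.mem_ofPred_eq, mem_antidiagonalTuple] at hf ⊢
  refine ⟨by rw [sum_add_distrib, hf.1], fun i j hij => ?_⟩
  have := hf.2 hij.le
  simp only
  omega

theorem add_choose_le_card_partitions_mul_factorial (k n : ℕ) :
    (n + k).choose k ≤ #{p : n.Partition | p.parts.card ≤ k + 1} * (k + 1)! := by
  rw [← card_antidiagonalTuple_succ, card_partitions_parts_le_eq_card_monotone, mul_comm]
  exact card_le_factorial_mul_card_filter_monotone comp_perm_mem_antidiagonalTuple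

theorem card_partitions_mul_factorial_le_add_choose (k n : ℕ) :
    #{p : n.Partition | p.parts.card ≤ k + 1} * (k + 1)! ≤
      (n + (∑ i : Fin (k + 1), (i : ℕ) + k)).choose k := by
  rw [← add_assoc, ← card_antidiagonalTuple_succ, card_partitions_parts_le_eq_card_monotone,
    mul_comm]
  grw [card_monotone_le_card_strictMono]
  exact factorial_mul_card_filter_strictMono_le_card comp_perm_mem_antidiagonalTuple

theorem partitions_at_most_k_parts_asymptotic (k : ℕ) (hk : 0 < k) :
    Tendsto (fun n : ℕ =>
        ((Finset.univ.filter (fun p : Nat.Partition n => p.parts.card ≤ k)).card : ℝ)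
          * (k - 1).factorial * k.factorial / (n : ℝ) ^ (k - 1))
      atTop (nhds 1) := by
  obtain ⟨k, rfl⟩ : ∃ j, k = j + 1 := ⟨k - 1, by omega⟩
  simp only [Nat.add_sub_cancel]
  refine tendsto_of_tendsto_of_tendsto_of_le_of_le (tendsto_add_choose_mul_factorial_div_pow k k)
    (tendsto_add_choose_mul_factorial_div_pow (∑ i : Fin (k + 1), (i : ℕ) + k) k)
    (fun n => ?_) (fun n => ?_) <;> dsimp only <;> rw [mul_right_comm _ (k ! : ℝ)] <;> gcongr
  · exact_mod_cast add_choose_le_card_partitions_mul_factorial k n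
  · exact_mod_cast card_partitions_mul_factorial_le_add_choose k n
end

section
/- If a sequence a : ℕ → ℤ has generating function ∑ a(n)Z^n = P(Z)/((1-Z^{n_1})⋯(1-Z^{n_k})) with P a polynomial with integer coefficients and P(1) ≠ 0, then a(n) is eventually a quasi-polynomial of degree exactly k-1, i.e., there exist a period N and polynomials q_0,...,q_{N-1} of degree k-1 such that a(n) = q_{n mod N}(n) for all sufficiently large n. -/
/-!
With `N = ∏ mᵢ`, each `1 - Z^{mᵢ}` divides `1 - Z^N` with cofactor `∑_{j < N/mᵢ} Z^{mᵢ j}`, so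
`∑ a(n) Zⁿ = Q(Z) / (1 - Z^N)^k` with `Q = P G` and `Q(1) = P(1) ∏ (N / mᵢ) ≠ 0`. Expanding
`(1 - Z^N)^{-k} = ∑ₜ C(t + k - 1, k - 1) Z^{N t}` gives, for `n ≥ deg Q`,
`a(n) = ∑_{d ≡ n (mod N)} Q_d C((n - d)/N + k - 1, k - 1)`, a polynomial in `n` on each residue
class. Its coefficient of `n^{k-1}` is `(∑_{d ≡ r} Q_d) / ((k - 1)! N^{k-1})`, and these residue
sums of the coefficients of `Q` add up to `Q(1) ≠ 0`, so one of them is nonzero.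
-/

open Filter PowerSeries

open Finset in
theorem prod_one_sub_pow_mul_prod_geom_sum {ι A : Type*} [Fintype ι] [CommRing A] (x : A)
    (m : ι → ℕ) {N : ℕ} (hm : ∀ i, m i ∣ N) :
    (∏ i, (1 - x ^ m i)) * ∏ i, ∑ j ∈ range (N / m i), (x ^ m i) ^ j
      = (1 - x ^ N) ^ Fintype.card ι := by
  rw [← prod_mul_distrib, ← card_univ, ← prod_const]
  refine prod_congr rfl fun i _ => ?_
  rw [mul_neg_geom_sum, ← pow_mul, Nat.mul_div_cancel' (hm i)]

namespace PowerSeries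

theorem coeff_expand_mk_choose {R : Type*} [CommRing R] {N : ℕ} (hN : N ≠ 0) (s n : ℕ) :
    coeff n (expand N hN (mk fun n => (Nat.choose (s + n) s : R)))
      = if N ∣ n then (Nat.choose (s + n / N) s : R) else 0 := by
  rw [coeff_expand, coeff_mk]

theorem eq_mul_expand_mk_choose_of_mul_one_sub_X_pow_pow_eq {R : Type*} [CommRing R]
    {N : ℕ} (hN : N ≠ 0) {s : ℕ} {f g : R⟦X⟧} (h : f * (1 - X ^ N) ^ (s + 1) = g) :
    f = g * expand N hN (mk fun n => (Nat.choose (s + n) s : R)) := by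
  have hinv := congrArg (expand N hN) (mk_add_choose_mul_one_sub_pow_eq_one (S := R) s)
  rw [map_mul, map_pow, map_sub, map_one, expand_X] at hinv
  rw [← h, mul_assoc, mul_comm ((1 - X ^ N) ^ (s + 1)), hinv, mul_one]

end PowerSeries

namespace Polynomial

open Finset

theorem exists_prod_one_sub_X_pow_mul_eq_one_sub_X_pow_pow {ι : Type*} [Fintype ι]
    (m : ι → ℕ) (hm : ∀ i, 0 < m i) :
    ∃ N, 0 < N ∧ ∃ G : ℤ[X], G.eval 1 ≠ 0 ∧
      (∏ i, (1 - X ^ m i)) * G = (1 - X ^ N) ^ Fintype.card ι := by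
  have hdvd : ∀ i, m i ∣ ∏ j, m j := fun i => dvd_prod_of_mem m (mem_univ i)
  refine ⟨∏ i, m i, prod_pos fun i _ => hm i, _, ?_,
    prod_one_sub_pow_mul_prod_geom_sum X m hdvd⟩
  have hquot : ∀ i, 0 < (∏ j, m j) / m i := fun i =>
    Nat.div_pos (Nat.le_of_dvd (prod_pos fun j _ => hm j) (hdvd i)) (hm i)
  simp only [eval_prod, eval_finsetSum, eval_pow, eval_X, one_pow, sum_const, card_range,
    nsmul_eq_mul, mul_one]
  exact prod_ne_zero_iff.2 fun i _ => Nat.cast_ne_zero.2 (hquot i).ne'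

variable (K : Type*) [Field K] [CharZero K]

noncomputable def progressionChoose (N s d : ℕ) : K[X] :=
  C (s.factorial : K)⁻¹ * (ascPochhammer K s).comp (C (N : K)⁻¹ * X + C (1 - (d : K) / N))

noncomputable def residueQuasiPolynomial (Q : ℤ[X]) (N s r : ℕ) : K[X] :=
  ∑ d ∈ Q.support with d % N = r, C (Q.coeff d : K) * progressionChoose K N s d

variable {K} {N : ℕ} (s d : ℕ)

theorem eval_progressionChoose (hN : N ≠ 0) (t : ℕ) :
    (progressionChoose K N s d).eval ((d + N * t : ℕ) : K) = (s + t).choose s := by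
  have harg : (N : K)⁻¹ * ((d + N * t : ℕ) : K) + (1 - (d : K) / N) = (t : K) + 1 := by
    push_cast
    field_simp
    ring
  have hfac : ((s.factorial : ℕ) : K) ≠ 0 := Nat.cast_ne_zero.2 s.factorial_ne_zero
  rw [progressionChoose, eval_mul, eval_C, eval_comp, eval_add, eval_mul, eval_C, eval_X, eval_C,
    harg, ← Nat.cast_succ, ← ascPochhammer_eval_cast, ascPochhammer_nat_eq_ascFactorial,
    Nat.ascFactorial_eq_factorial_mul_choose, add_comm t, Nat.cast_mul, inv_mul_cancel_left₀ hfac]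

theorem natDegree_progressionChoose (hN : N ≠ 0) : (progressionChoose K N s d).natDegree = s := by
  have hN' : (N : K)⁻¹ ≠ 0 := inv_ne_zero (Nat.cast_ne_zero.2 hN)
  rw [progressionChoose, natDegree_C_mul (inv_ne_zero (Nat.cast_ne_zero.2 s.factorial_ne_zero)),
    natDegree_comp, ascPochhammer_natDegree, natDegree_linear hN', mul_one]

theorem coeff_progressionChoose_self (hN : N ≠ 0) :
    (progressionChoose K N s d).coeff s = (s.factorial : K)⁻¹ * (N : K)⁻¹ ^ s := by
  have hN' : (N : K)⁻¹ ≠ 0 := inv_ne_zero (Nat.cast_ne_zero.2 hN)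
  calc (progressionChoose K N s d).coeff s = (progressionChoose K N s d).leadingCoeff := by
        rw [leadingCoeff, natDegree_progressionChoose s d hN]
    _ = _ := by
      rw [progressionChoose, leadingCoeff_mul, leadingCoeff_C,
        leadingCoeff_comp (by rw [natDegree_linear hN']; exact one_ne_zero),
        (monic_ascPochhammer K s).leadingCoeff, one_mul, leadingCoeff_linear hN',
        ascPochhammer_natDegree]

theorem degree_residueQuasiPolynomial_le (hN : N ≠ 0) (Q : ℤ[X]) (r : ℕ) :
    (residueQuasiPolynomial K Q N s r).degree ≤ s := by
  refine (degree_sum_le _ _).trans (Finset.sup_le fun d _ => degree_le_of_natDegree_le ?_)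
  exact (natDegree_C_mul_le _ _).trans (natDegree_progressionChoose s d hN).le

theorem coeff_residueQuasiPolynomial (hN : N ≠ 0) (Q : ℤ[X]) (r : ℕ) :
    (residueQuasiPolynomial K Q N s r).coeff s
      = (s.factorial : K)⁻¹ * (N : K)⁻¹ ^ s
          * ((∑ d ∈ Q.support with d % N = r, Q.coeff d : ℤ) : K) := by
  simp only [residueQuasiPolynomial, finsetSum_coeff, coeff_C_mul, Int.cast_sum, mul_sum]
  refine sum_congr rfl fun d _ => ?_
  rw [coeff_progressionChoose_self s d hN, mul_comm]

theorem exists_degree_residueQuasiPolynomial_eq (hN : 0 < N) {Q : ℤ[X]} (hQ : Q.eval 1 ≠ 0) :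
    ∃ r < N, (residueQuasiPolynomial K Q N s r).degree = s := by
  have hfibers : ∑ r ∈ range N, ∑ d ∈ Q.support with d % N = r, Q.coeff d = Q.eval 1 := by
    rw [sum_fiberwise_of_maps_to fun d _ => mem_range.2 (Nat.mod_lt d hN), eval_eq_sum, sum_def]
    simp
  obtain ⟨r, hr, hne⟩ := exists_ne_zero_of_sum_ne_zero (hfibers ▸ hQ)
  refine ⟨r, mem_range.1 hr, degree_eq_of_le_of_coeff_ne_zero
    (degree_residueQuasiPolynomial_le s hN.ne' Q r) ?_⟩
  rw [coeff_residueQuasiPolynomial s hN.ne']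
  have hfac : (s.factorial : K) ≠ 0 := Nat.cast_ne_zero.2 s.factorial_ne_zero
  have hN' : (N : K) ≠ 0 := Nat.cast_ne_zero.2 hN.ne'
  exact mul_ne_zero (mul_ne_zero (inv_ne_zero hfac) (pow_ne_zero _ (inv_ne_zero hN')))
    (Int.cast_ne_zero.2 hne)

end Polynomial

open Polynomial Finset in
theorem cast_eq_eval_residueQuasiPolynomial (K : Type*) [Field K] [CharZero K] {N : ℕ}
    (hN : N ≠ 0) (s : ℕ) {Q : ℤ[X]} {a : ℕ → ℤ}
    (ha : mk a = (Q : ℤ⟦X⟧) * expand N hN (mk fun n => (Nat.choose (s + n) s : ℤ)))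
    {n : ℕ} (hn : Q.natDegree ≤ n) :
    (a n : K) = (residueQuasiPolynomial K Q N s (n % N)).eval (n : K) := by
  have hsupp : ∀ d ∈ Q.support, d ≤ n := fun d hd => (le_natDegree_of_mem_supp d hd).trans hn
  have hcoeff : a n = ∑ d ∈ Q.support,
      Q.coeff d * if N ∣ n - d then ((s + (n - d) / N).choose s : ℤ) else 0 := by
    rw [← coeff_mk n a, ha, PowerSeries.coeff_mul, Nat.sum_antidiagonal_eq_sum_range_succ_mk]
    simp only [Polynomial.coeff_coe, coeff_expand_mk_choose]
    refine (sum_subset (fun d hd => mem_range.2 (Nat.lt_succ_of_le (hsupp d hd)))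
      fun d _ hd => ?_).symm
    rw [notMem_support_iff.1 hd, zero_mul]
  rw [hcoeff, residueQuasiPolynomial, eval_finsetSum, sum_filter, Int.cast_sum]
  refine sum_congr rfl fun d hd => ?_
  rw [eval_mul, eval_C]
  by_cases hmod : d % N = n % N
  · obtain ⟨t, ht⟩ := (Nat.modEq_iff_dvd' (hsupp d hd)).1 hmod
    have hnt : n = d + N * t := by have := hsupp d hd; omega
    rw [if_pos hmod, if_pos ⟨t, ht⟩, ht, Nat.mul_div_cancel_left t (Nat.pos_of_ne_zero hN), hnt,
      eval_progressionChoose s d hN]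
    push_cast
    rfl
  · have hndvd : ¬ N ∣ n - d := fun h => hmod ((Nat.modEq_iff_dvd' (hsupp d hd)).2 h)
    rw [if_neg hmod, if_neg hndvd, mul_zero, Int.cast_zero]

theorem eventually_quasiPolynomial_of_rational_generating_function
    (k : ℕ) (hk : 0 < k) (a : ℕ → ℤ) (m : Fin k → ℕ) (hm : ∀ i, 0 < m i)
    (P : Polynomial ℤ)
    (hgen : (PowerSeries.mk a) * ∏ i, (1 - (PowerSeries.X : PowerSeries ℤ) ^ (m i))
              = (P : PowerSeries ℤ))
    (hP1 : P.eval 1 ≠ 0) :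
    ∃ N : ℕ, ∃ hN : 0 < N, ∃ q : Fin N → Polynomial ℚ,
      (∀ i, (q i).degree ≤ (k - 1 : ℕ)) ∧
      (∃ i, (q i).degree = (k - 1 : ℕ)) ∧
      ∀ᶠ n in atTop, (a n : ℚ) = (q ⟨n % N, Nat.mod_lt n hN⟩).eval (n : ℚ) := by
  obtain ⟨s, rfl⟩ : ∃ s, k = s + 1 := ⟨k - 1, (Nat.succ_pred_eq_of_pos hk).symm⟩
  obtain ⟨N, hN, G, hG1, hG⟩ :=
    Polynomial.exists_prod_one_sub_X_pow_mul_eq_one_sub_X_pow_pow m hm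
  rw [Fintype.card_fin] at hG
  have hQ : mk a * (1 - X ^ N) ^ (s + 1) = ((P * G : Polynomial ℤ) : ℤ⟦X⟧) := by
    have := congrArg (Polynomial.coeToPowerSeries.ringHom (R := ℤ)) hG
    simp only [map_mul, map_prod, map_sub, map_pow, map_one,
      Polynomial.coeToPowerSeries.ringHom_apply, Polynomial.coe_X] at this
    rw [← this, ← mul_assoc, hgen, Polynomial.coe_mul]
  have ha := PowerSeries.eq_mul_expand_mk_choose_of_mul_one_sub_X_pow_pow_eq hN.ne' hQ
  have hQ1 : (P * G).eval 1 ≠ 0 := by rw [Polynomial.eval_mul]; exact mul_ne_zero hP1 hG1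
  obtain ⟨r, hr, hdeg⟩ := Polynomial.exists_degree_residueQuasiPolynomial_eq (K := ℚ) s hN hQ1
  exact ⟨N, hN, fun i => Polynomial.residueQuasiPolynomial ℚ (P * G) N s i,
    fun i => Polynomial.degree_residueQuasiPolynomial_le s hN.ne' _ _, ⟨⟨r, hr⟩, hdeg⟩,
    eventually_atTop.2 ⟨_, fun n hn => cast_eq_eval_residueQuasiPolynomial ℚ hN.ne' s ha hn⟩⟩
end

section
/- If a sequence a : ℕ → ℕ is nondecreasing and eventually a quasi-polynomial of degree k-1, then a(n) ~ c·n^(k-1) for some positive real constant c (the leading coefficient functions are eventually constant). -/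
open Filter Topology Polynomial

/-!
Write `d = k - 1` and `cᵢ` for the coefficient of `X ^ d` in `qᵢ`, so that `a n / n ^ d → cᵢ`
along the residue class `i mod N`. Monotonicity gives `a (mN + i) ≤ a ((m + 1)N + j)`, and since a
bounded shift of the argument does not change the limit of `qⱼ(x) / x ^ d`, this forces
`cᵢ ≤ cⱼ` for all `i, j`. Hence all `cᵢ` agree, `a n / n ^ d` converges to their common value
`c ≥ 0`, and `c ≠ 0` because some `qᵢ` has degree exactly `d`.
-/

theorem Polynomial.tendsto_eval_div_pow_of_degree_le {𝕜 : Type*} [NormedField 𝕜] [LinearOrder 𝕜]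
    [IsStrictOrderedRing 𝕜] [OrderTopology 𝕜] {p : 𝕜[X]} {d : ℕ} (hp : p.degree ≤ d) :
    Tendsto (fun x => p.eval x / x ^ d) atTop (𝓝 (p.coeff d)) := by
  rcases hp.lt_or_eq with hlt | heq
  · rw [coeff_eq_zero_of_degree_lt hlt]
    simpa using div_tendsto_atTop_zero_of_degree_lt p (X ^ d) (by rwa [degree_X_pow])
  · have hd : p.natDegree = d := natDegree_eq_of_degree_eq_some heq
    simpa [← hd] using div_tendsto_atTop_leadingCoeff_div_of_degree_eq p (X ^ d)
      (by rw [heq, degree_X_pow])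

theorem tendsto_add_const_div_pow_of_tendsto_div_pow {f : ℝ → ℝ} {c : ℝ} {d : ℕ} (s : ℝ)
    (hf : Tendsto (fun x => f x / x ^ d) atTop (𝓝 c)) :
    Tendsto (fun x => f (x + s) / x ^ d) atTop (𝓝 c) := by
  have hshift := hf.comp (tendsto_atTop_add_const_right _ s tendsto_id)
  have hratio : Tendsto (fun x : ℝ => (1 + s / x) ^ d) atTop (𝓝 1) := by
    simpa using ((tendsto_const_nhds.div_atTop tendsto_id).const_add (1 : ℝ)).pow d
  have hprod : Tendsto (fun x => f (x + s) / (x + s) ^ d * (1 + s / x) ^ d) atTop (𝓝 c) := by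
    simpa using hshift.mul hratio
  refine hprod.congr' ?_
  filter_upwards [eventually_gt_atTop 0, eventually_gt_atTop (-s)] with x hx hxs
  have : x + s ≠ 0 := by linarith
  rw [show 1 + s / x = (x + s) / x by field_simp, div_pow]
  field_simp

theorem Polynomial.coeff_le_coeff_of_eval_le_eval_add {α : Type*} {l : Filter α} [l.NeBot]
    {p r : ℝ[X]} {d : ℕ} (hp : p.degree ≤ d) (hr : r.degree ≤ d) {s : ℝ} {x : α → ℝ}
    (hx : Tendsto x l atTop) (hle : ∀ᶠ t in l, p.eval (x t) ≤ r.eval (x t + s)) :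
    p.coeff d ≤ r.coeff d := by
  refine le_of_tendsto_of_tendsto ((tendsto_eval_div_pow_of_degree_le hp).comp hx)
    ((tendsto_add_const_div_pow_of_tendsto_div_pow s
      (tendsto_eval_div_pow_of_degree_le hr)).comp hx) ?_
  filter_upwards [hle, hx.eventually (eventually_ge_atTop 0)] with t ht hxt
  exact div_le_div_of_nonneg_right ht (pow_nonneg hxt d)

theorem Filter.tendsto_select_of_forall_tendsto {ι α β : Type*} [Finite ι] {l : Filter α}
    {l' : Filter β} {g : ι → α → β} (h : ∀ i, Tendsto (g i) l l') (σ : α → ι) :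
    Tendsto (fun x => g (σ x) x) l l' := fun _ hU =>
  (eventually_all.2 fun i => h i hU).mono fun x hx => hx (σ x)

theorem tendsto_mul_add_const_atTop {N : ℕ} (hN : 0 < N) (i : ℕ) :
    Tendsto (fun m => m * N + i) atTop atTop :=
  tendsto_atTop_mono (fun m => Nat.le_add_right_of_le (Nat.le_mul_of_pos_right m hN)) tendsto_id

theorem eventually_eq_on_residue_class {α : Type*} {f : ℕ → α} {N : ℕ} (hN : 0 < N)
    {g : Fin N → ℕ → α} (h : ∀ᶠ n in atTop, f n = g ⟨n % N, Nat.mod_lt n hN⟩ n) (i : Fin N) :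
    ∀ᶠ m in atTop, f (m * N + i) = g i (m * N + i) := by
  filter_upwards [(tendsto_mul_add_const_atTop hN i).eventually h] with m hm
  have hmod : (⟨(m * N + i) % N, Nat.mod_lt _ hN⟩ : Fin N) = i :=
    Fin.ext (Nat.mul_add_mod_of_lt i.isLt)
  rwa [hmod] at hm

theorem coeff_le_coeff_of_monotone_quasiPolynomial {a : ℕ → ℝ} (ha : Monotone a) {N : ℕ}
    (hN : 0 < N) {q : Fin N → ℝ[X]} {d : ℕ} (hdeg : ∀ i, (q i).degree ≤ d)
    (heq : ∀ᶠ n in atTop, a n = (q ⟨n % N, Nat.mod_lt n hN⟩).eval (n : ℝ)) (i j : Fin N) :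
    (q i).coeff d ≤ (q j).coeff d := by
  have hres (r : Fin N) : ∀ᶠ m in atTop, a (m * N + r) = (q r).eval ((m * N + r : ℕ) : ℝ) :=
    eventually_eq_on_residue_class hN (g := fun r n => (q r).eval (n : ℝ)) heq r
  refine coeff_le_coeff_of_eval_le_eval_add (hdeg i) (hdeg j) (s := N + j - i)
    (tendsto_natCast_atTop_atTop.comp (tendsto_mul_add_const_atTop hN i)) ?_
  filter_upwards [hres i, (tendsto_add_atTop_nat 1).eventually (hres j)] with m hi hj
  have hcast : ((m * N + i : ℕ) : ℝ) + (N + j - i) = (((m + 1) * N + j : ℕ) : ℝ) := by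
    push_cast; ring
  rw [Function.comp_apply, ← hi, hcast, ← hj]
  exact ha (by rw [Nat.succ_mul]; omega)

theorem quasiPolynomial_monotone_asymptotic_general
    (k : ℕ) (a : ℕ → ℕ) (ha : Monotone a)
    (N : ℕ) (hN : 0 < N) (q : Fin N → Polynomial ℝ)
    (hdeg : ∀ i, (q i).degree ≤ (k - 1 : ℕ))
    (hdeg' : ∃ i, (q i).degree = (k - 1 : ℕ))
    (heq : ∀ᶠ n in atTop, (a n : ℝ) = (q ⟨n % N, Nat.mod_lt n hN⟩).eval (n : ℝ)) :
    ∃ c : ℝ, 0 < c ∧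
      Tendsto (fun n : ℕ => (a n : ℝ) / (n : ℝ) ^ (k - 1)) atTop (nhds c) := by
  obtain ⟨i₀, hi₀⟩ := hdeg'
  have hcoeff (i : Fin N) : (q i).coeff (k - 1) = (q i₀).coeff (k - 1) :=
    have hle := coeff_le_coeff_of_monotone_quasiPolynomial (Nat.mono_cast.comp ha) hN hdeg heq
    le_antisymm (hle i i₀) (hle i₀ i)
  have hlim : Tendsto (fun n : ℕ => (a n : ℝ) / (n : ℝ) ^ (k - 1)) atTop
      (𝓝 ((q i₀).coeff (k - 1))) := by
    refine (tendsto_select_of_forall_tendsto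
      (g := fun i (n : ℕ) => (q i).eval (n : ℝ) / (n : ℝ) ^ (k - 1)) (fun i => ?_)
      (fun n => (⟨n % N, Nat.mod_lt n hN⟩ : Fin N))).congr' ?_
    · rw [← hcoeff i]
      exact (tendsto_eval_div_pow_of_degree_le (hdeg i)).comp tendsto_natCast_atTop_atTop
    · filter_upwards [heq] with n hn
      rw [hn]
  exact ⟨_, (ge_of_tendsto' hlim fun n => by positivity).lt_of_ne'
    (coeff_ne_zero_of_eq_degree hi₀), hlim⟩

theorem quasiPolynomial_monotone_asymptotic
    (k : ℕ) (hk : 0 < k) (a : ℕ → ℕ) (ha : Monotone a)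
    (N : ℕ) (hN : 0 < N) (q : Fin N → Polynomial ℝ)
    (hdeg : ∀ i, (q i).degree ≤ (k - 1 : ℕ))
    (hdeg' : ∃ i, (q i).degree = (k - 1 : ℕ))
    (heq : ∀ᶠ n in atTop, (a n : ℝ) = (q ⟨n % N, Nat.mod_lt n hN⟩).eval (n : ℝ)) :
    ∃ c : ℝ, 0 < c ∧
      Tendsto (fun n : ℕ => (a n : ℝ) / (n : ℝ) ^ (k - 1)) atTop (nhds c) :=
  quasiPolynomial_monotone_asymptotic_general k a ha N hN q hdeg hdeg' heq
end

section
/- Let A = ⨁_{n≥0} A_n be a graded connected commutative K-algebra, B ⊆ A a graded subalgebra with dim_K B_n ≤ 1 for all n, and suppose A = B ⊕ J as graded K-vector spaces where J is a K-subspace with J·J ⊆ B and J·B ⊆ J ⊕ B. If A is generated as an algebra by a finite set S of homogeneous elements of positive degree, then dim_K A_n ≤ |S| + 1 for all n. -/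
/-!
Write each generator as `s = b_s + j_s` with `b_s ∈ B` and `j_s ∈ J` homogeneous of degree `d_s`.
Since `J·J ⊆ B` and `A` is commutative, the `B`-module spanned by `1` and the `j_s` is closed under
multiplication, hence equals `A`. As `B` and `J` split every graded piece, `B` is a graded subspace,
so in degree `n` this reads `A_n = B_n + ∑_s j_s B_{n - d_s}`: at most `|S| + 1` summands, each of
dimension at most one.
-/

open DirectSum Pointwise Submodule

section Homogeneous

variable {ι R M : Type*} [DecidableEq ι]

theorem Submodule.isHomogeneous_iSup_inf [Semiring R] [AddCommMonoid M] [Module R M]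
    (ℳ : ι → Submodule R M) [Decomposition ℳ] (P : Submodule R M) :
    (⨆ i, P ⊓ ℳ i).IsHomogeneous ℳ := by
  intro j x hx
  refine iSup_induction _ (motive := fun x => (decompose ℳ x j : M) ∈ ⨆ i, P ⊓ ℳ i) hx
    (fun i x hx => ?_) (by simp) fun x y hx hy => ?_
  · obtain rfl | hij := eq_or_ne i j
    · rw [decompose_of_mem_same ℳ hx.2]
      exact mem_iSup_of_mem i hx
    · rw [decompose_of_mem_ne ℳ hx.2 hij]
      exact zero_mem _
  · rw [decompose_add, DirectSum.add_apply, AddMemClass.coe_add]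
    exact add_mem hx hy

variable [Ring R] [AddCommGroup M] [Module R M] (ℳ : ι → Submodule R M) [Decomposition ℳ]

theorem Submodule.eq_iSup_inf_of_disjoint {P Q : Submodule R M} (hPQ : Disjoint P Q)
    (hℳ : ∀ i, ℳ i ≤ P ⊓ ℳ i ⊔ Q ⊓ ℳ i) : P = ⨆ i, P ⊓ ℳ i := by
  have hP : ⨆ i, P ⊓ ℳ i ≤ P := iSup_le fun _ => inf_le_left
  have hQ : ⨆ i, Q ⊓ ℳ i ≤ Q := iSup_le fun _ => inf_le_left
  have htop : (⨆ i, P ⊓ ℳ i) ⊔ ⨆ i, Q ⊓ ℳ i = ⊤ := by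
    rw [← iSup_sup_eq, eq_top_iff, ← (Decomposition.isInternal ℳ).submodule_iSup_eq_top]
    exact iSup_mono hℳ
  calc P = ((⨆ i, P ⊓ ℳ i) ⊔ ⨆ i, Q ⊓ ℳ i) ⊓ P := by rw [htop, top_inf_eq]
    _ = (⨆ i, P ⊓ ℳ i) ⊔ (⨆ i, Q ⊓ ℳ i) ⊓ P := sup_inf_assoc_of_le _ hP
    _ = ⨆ i, P ⊓ ℳ i := by rw [(hPQ.symm.mono_left hQ).eq_bot, sup_bot_eq]

theorem Submodule.isHomogeneous_of_disjoint {P Q : Submodule R M} (hPQ : Disjoint P Q)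
    (hℳ : ∀ i, ℳ i ≤ P ⊓ ℳ i ⊔ Q ⊓ ℳ i) : P.IsHomogeneous ℳ := by
  rw [eq_iSup_inf_of_disjoint ℳ hPQ hℳ]
  exact isHomogeneous_iSup_inf ℳ P

end Homogeneous

section FiniteGrading

variable {R A : Type*} [CommSemiring R] [Semiring A] [Algebra R A]
  (𝒜 : ℕ → Submodule R A) [GradedAlgebra 𝒜]

theorem GradedAlgebra.exists_mem_and_mem_pow_of_mem_closure {S : Set A}
    (hS : ∀ s ∈ S, ∃ d, 0 < d ∧ s ∈ 𝒜 d) {c : A} (hc : c ∈ Submonoid.closure S) :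
    ∃ k, c ∈ 𝒜 k ∧ c ∈ insert 1 S ^ k := by
  induction hc using Submonoid.closure_induction with
  | mem s hs =>
    obtain ⟨d, hd, hsd⟩ := hS s hs
    refine ⟨d, hsd, Set.pow_subset_pow_right (Set.mem_insert 1 S) hd ?_⟩
    simpa using Set.mem_insert_of_mem 1 hs
  | one => exact ⟨0, SetLike.GradedOne.one_mem, by simp⟩
  | mul x y _ _ hx hy =>
    obtain ⟨k, hxk, hxS⟩ := hx
    obtain ⟨l, hyl, hyS⟩ := hy
    exact ⟨k + l, SetLike.mul_mem_graded hxk hyl, pow_add (insert 1 S) k l ▸ Set.mul_mem_mul hxS hyS⟩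

theorem GradedAlgebra.le_map_proj_span_pow {S : Set A} (hS : ∀ s ∈ S, ∃ d, 0 < d ∧ s ∈ 𝒜 d)
    (hgen : Algebra.adjoin R S = ⊤) (n : ℕ) :
    𝒜 n ≤ (span R (insert 1 S ^ n)).map (GradedAlgebra.proj 𝒜 n) := by
  have hclosure : (span R (Submonoid.closure S : Set A)).map (GradedAlgebra.proj 𝒜 n) ≤
      (span R (insert 1 S ^ n)).map (GradedAlgebra.proj 𝒜 n) := by
    rw [map_span, span_le]
    rintro _ ⟨c, hc, rfl⟩
    obtain ⟨k, hck, hcS⟩ := exists_mem_and_mem_pow_of_mem_closure 𝒜 hS hc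
    obtain rfl | hkn := eq_or_ne k n
    · exact mem_map_of_mem (subset_span hcS)
    · rw [GradedAlgebra.proj_apply, decompose_of_mem_ne 𝒜 hck hkn]
      exact zero_mem _
  intro x hx
  have hx' : x ∈ span R (Submonoid.closure S : Set A) := by
    rw [← Algebra.adjoin_eq_span, hgen]
    trivial
  have hproj : GradedAlgebra.proj 𝒜 n x = x := by
    rw [GradedAlgebra.proj_apply, decompose_of_mem_same 𝒜 hx]
  exact hproj ▸ hclosure (mem_map_of_mem hx')

theorem GradedAlgebra.finite_of_adjoin_finset_eq_top {S : Finset A}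
    (hS : ∀ s ∈ S, ∃ d, 0 < d ∧ s ∈ 𝒜 d) (hgen : Algebra.adjoin R (S : Set A) = ⊤) (n : ℕ) :
    Module.Finite R (𝒜 n) := by
  classical
  have h : 𝒜 n = (span R ↑(insert 1 S ^ n)).map (GradedAlgebra.proj 𝒜 n) := by
    refine le_antisymm ?_ (map_le_iff_le_comap.2 fun x _ => ?_)
    · simpa using le_map_proj_span_pow 𝒜 hS hgen n
    · rw [mem_comap, GradedAlgebra.proj_apply]
      exact SetLike.coe_mem _
  rw [h]
  exact Module.Finite.map _ _

end FiniteGrading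

section

variable {K A : Type*} [CommSemiring K] [CommSemiring A] [Algebra K A]

theorem Subalgebra.adjoin_le_toSubmodule_mul_span {B : Subalgebra K A} {T X : Set A}
    (hT : ∀ x ∈ T, ∀ y ∈ T, x * y ∈ B) (hX : X ⊆ (toSubmodule B ⊔ span K T : Submodule K A)) :
    toSubmodule (Algebra.adjoin K X) ≤ toSubmodule B * span K (insert 1 T) := by
  set B' := toSubmodule B
  set N := span K (insert 1 T)
  have hB : ∀ b ∈ B, b ∈ B' * N := fun b hb =>
    mul_one b ▸ mul_mem_mul hb (subset_span (Set.mem_insert 1 T))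
  have hN : ∀ t ∈ N, t ∈ B' * N := fun t ht => one_mul t ▸ mul_mem_mul (one_mem B) ht
  have hNN : N * N ≤ B' * N := by
    rw [span_mul_span, span_le]
    rintro _ ⟨x, hx, y, hy, rfl⟩
    rcases hx with rfl | hx
    · exact hN _ (by simpa using subset_span hy)
    rcases hy with rfl | hy
    · exact hN _ (by simpa using subset_span (Set.mem_insert_of_mem 1 hx))
    · exact hB _ (hT x hx y hy)
  have hM : (B' * N) * (B' * N) ≤ B' * N :=
    calc (B' * N) * (B' * N) = (B' * B') * (N * N) := mul_mul_mul_comm _ _ _ _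
      _ ≤ (B' * B') * (B' * N) := mul_le_mul_right hNN _
      _ = B' * N := by rw [← mul_assoc, B.isIdempotentElem_toSubmodule.eq,
          B.isIdempotentElem_toSubmodule.eq]
  have hBN : B' ⊔ span K T ≤ B' * N :=
    sup_le (fun b hb => hB b hb) fun t ht => hN t (span_mono (Set.subset_insert 1 T) ht)
  let M := (B' * N).toSubalgebra (hB 1 (one_mem B)) fun x y hx hy => hM (mul_mem_mul hx hy)
  exact fun _ hx => Algebra.adjoin_le (S := M) (hX.trans hBN) hx

end

theorem GradedAlgebra.map_proj_mul_span_le {K A ι : Type*} [CommSemiring K] [Semiring A]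
    [Algebra K A] (𝒜 : ℕ → Submodule K A) [GradedAlgebra 𝒜] {P : Submodule K A}
    (hP : P.IsHomogeneous 𝒜) (I : Set ι) (t : ι → A) (deg : ι → ℕ)
    (ht : ∀ i ∈ I, t i ∈ 𝒜 (deg i)) (v : ℕ → A) (hv : ∀ m, P ⊓ 𝒜 m ≤ span K {v m}) (n : ℕ) :
    (P * span K (insert 1 (t '' I))).map (GradedAlgebra.proj 𝒜 n) ≤
      span K (insert (v n) ((fun i => v (n - deg i) * t i) '' I)) := by
  rw [← span_eq P, span_mul_span, map_span, span_le]
  rintro _ ⟨_, ⟨p, hp, u, hu, rfl⟩, rfl⟩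
  have hpv : ∀ m, (decompose 𝒜 p m : A) ∈ span K {v m} := fun m =>
    hv m ⟨hP m hp, SetLike.coe_mem _⟩
  rcases hu with rfl | ⟨i, hi, rfl⟩
  · simpa using span_mono (Set.singleton_subset_iff.2 (Set.mem_insert _ _)) (hpv n)
  · rw [GradedAlgebra.proj_apply, coe_decompose_mul_of_right_mem 𝒜 n (ht i hi)]
    split_ifs
    · obtain ⟨c, hc⟩ := mem_span_singleton.1 (hpv (n - deg i))
      rw [← hc, smul_mul_assoc]
      exact smul_mem _ c (subset_span (Set.mem_insert_of_mem _ ⟨i, hi, rfl⟩))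
    · exact zero_mem _

theorem graded_dimension_bound_of_decomposition_general
    {K A : Type*} [Field K] [CommRing A] [Algebra K A]
    (𝒜 : ℕ → Submodule K A) [GradedAlgebra 𝒜]
    (B : Subalgebra K A) (J : Submodule K A)
    (hdecomp : ∀ n : ℕ, 𝒜 n = (Subalgebra.toSubmodule B ⊓ 𝒜 n) ⊔ (J ⊓ 𝒜 n))
    (hdisj : Subalgebra.toSubmodule B ⊓ J = ⊥)
    (hBdim : ∀ n : ℕ, Module.finrank K ↥(Subalgebra.toSubmodule B ⊓ 𝒜 n) ≤ 1)
    (hJJ : ∀ x ∈ J, ∀ y ∈ J, x * y ∈ B)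
    (S : Finset A) (hShom : ∀ s ∈ S, ∃ d : ℕ, 0 < d ∧ s ∈ 𝒜 d)
    (hgen : Algebra.adjoin K (S : Set A) = ⊤) :
    ∀ n : ℕ, Module.finrank K ↥(𝒜 n) ≤ S.card + 1 := by
  classical
  intro n
  set B' := Subalgebra.toSubmodule B
  have hBhom : B'.IsHomogeneous 𝒜 :=
    isHomogeneous_of_disjoint 𝒜 (disjoint_iff.2 hdisj) fun i => (hdecomp i).le
  -- `finrank` is `0` on infinite-dimensional spaces, so `hBdim` needs `𝒜 m` finite-dimensional.
  have hline : ∀ m, ∃ v, B' ⊓ 𝒜 m ≤ span K {v} := fun m => by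
    have := GradedAlgebra.finite_of_adjoin_finset_eq_top 𝒜 hShom hgen m
    have : FiniteDimensional K ↥(B' ⊓ 𝒜 m) := Submodule.finiteDimensional_of_le inf_le_right
    obtain ⟨v, hv⟩ := ((B' ⊓ 𝒜 m).finrank_le_one_iff_isPrincipal.1 (hBdim m)).principal
    exact ⟨v, hv.le⟩
  choose v hv using hline
  choose! d _ hSd using hShom
  have hsplit : ∀ s ∈ S, ∃ j ∈ J ⊓ 𝒜 (d s), s - j ∈ B := fun s hs => by
    obtain ⟨b, hb, j, hj, rfl⟩ := mem_sup.1 (hdecomp (d s) ▸ hSd s hs)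
    exact ⟨j, hj, by simpa using (Subalgebra.mem_toSubmodule B).1 hb.1⟩
  choose! j hj hsj using hsplit
  have htop : B' * span K (insert 1 (j '' S)) = ⊤ := by
    rw [eq_top_iff, ← Algebra.top_toSubmodule, ← hgen]
    refine Subalgebra.adjoin_le_toSubmodule_mul_span ?_ fun s hs =>
      mem_sup.2 ⟨s - j s, hsj s hs, j s, subset_span ⟨s, hs, rfl⟩, sub_add_cancel s (j s)⟩
    rintro _ ⟨s, hs, rfl⟩ _ ⟨t, ht, rfl⟩
    exact hJJ _ (hj s hs).1 _ (hj t ht).1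
  have hspan : 𝒜 n ≤ span K ↑(insert (v n) (S.image fun s => v (n - d s) * j s)) := by
    have h := GradedAlgebra.map_proj_mul_span_le 𝒜 hBhom S j d (fun s hs => (hj s hs).2) v hv n
    rw [htop] at h
    push_cast
    intro x hx
    exact h ⟨x, trivial, by rw [GradedAlgebra.proj_apply, decompose_of_mem_same 𝒜 hx]⟩
  calc Module.finrank K ↥(𝒜 n) ≤ _ := Submodule.finrank_mono hspan
    _ ≤ _ := finrank_span_finset_le_card _
    _ ≤ S.card + 1 := (Finset.card_insert_le _ _).trans (Nat.succ_le_succ Finset.card_image_le)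

theorem graded_dimension_bound_of_decomposition
    {K A : Type*} [Field K] [CommRing A] [Algebra K A]
    (𝒜 : ℕ → Submodule K A) [GradedAlgebra 𝒜]
    (hconn : Module.finrank K ↥(𝒜 0) = 1)
    (B : Subalgebra K A) (J : Submodule K A)
    (hdecomp : ∀ n : ℕ, 𝒜 n = (Subalgebra.toSubmodule B ⊓ 𝒜 n) ⊔ (J ⊓ 𝒜 n))
    (hdisj : Subalgebra.toSubmodule B ⊓ J = ⊥)
    (hBdim : ∀ n : ℕ, Module.finrank K ↥(Subalgebra.toSubmodule B ⊓ 𝒜 n) ≤ 1)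
    (hJJ : ∀ x ∈ J, ∀ y ∈ J, x * y ∈ B)
    (hJB : ∀ x ∈ J, ∀ y ∈ B, x * y ∈ J ⊔ Subalgebra.toSubmodule B)
    (S : Finset A) (hShom : ∀ s ∈ S, ∃ d : ℕ, 0 < d ∧ s ∈ 𝒜 d)
    (hgen : Algebra.adjoin K (S : Set A) = ⊤) :
    ∀ n : ℕ, Module.finrank K ↥(𝒜 n) ≤ S.card + 1 :=
  graded_dimension_bound_of_decomposition_general 𝒜 B J hdecomp hdisj hBdim hJJ S hShom hgen
end

section
/- There is no choice of positive integers n_1, n_2, n_3 such that (1 - Z + 2Z² - Z³)·(1-Z^{n_1})(1-Z^{n_2})(1-Z^{n_3})/(1-Z)³ is a polynomial with nonnegative coefficients. -/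
/-! Since `1 - Z^n = (1 + Z + ⋯ + Z^(n-1)) (1 - Z)`, any such quotient is the numerator times
a product of monic polynomials, so its leading coefficient is that of `1 - Z + 2Z² - Z³`,
namely `-1`. -/

open Polynomial Finset

theorem Polynomial.leadingCoeff_eq_of_mul_prod_one_sub_X_pow {R ι : Type*} [CommRing R]
    [IsDomain R] (s : Finset ι) (n : ι → ℕ) (hn : ∀ i ∈ s, n i ≠ 0) {p Q : R[X]}
    (h : p * ∏ i ∈ s, (1 - X ^ n i) = Q * (1 - X) ^ #s) :
    Q.leadingCoeff = p.leadingCoeff := by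
  have hfactor : ∏ i ∈ s, (1 - X ^ n i : R[X]) =
      (∏ i ∈ s, ∑ j ∈ range (n i), X ^ j) * (1 - X) ^ #s := by
    simp only [← geom_sum_mul_neg, prod_mul_distrib, prod_const]
  have hQ : Q = p * ∏ i ∈ s, ∑ j ∈ range (n i), (X : R[X]) ^ j := by
    have hX : (1 - X : R[X]) ≠ 0 := sub_ne_zero.2 (by simpa using (X_ne_C (1 : R)).symm)
    refine mul_right_cancel₀ (pow_ne_zero #s hX) ?_
    rw [← h, hfactor, mul_assoc]
  rw [hQ, leadingCoeff_mul_monic (monic_prod_of_monic _ _ fun i hi => monic_geom_sum_X (hn i hi))]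

theorem no_nonnegative_numerator :
    ¬ ∃ (n₁ n₂ n₃ : ℕ), 0 < n₁ ∧ 0 < n₂ ∧ 0 < n₃ ∧
      ∃ Q : Polynomial ℤ, (∀ i : ℕ, 0 ≤ Q.coeff i) ∧
        (1 - X + 2 * X ^ 2 - X ^ 3) * ((1 - X ^ n₁) * (1 - X ^ n₂) * (1 - X ^ n₃))
          = Q * (1 - X) ^ 3 := by
  rintro ⟨n₁, n₂, n₃, h₁, h₂, h₃, Q, hQ, heq⟩
  have hlead : Q.leadingCoeff = (1 - X + 2 * X ^ 2 - X ^ 3 : ℤ[X]).leadingCoeff := by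
    refine leadingCoeff_eq_of_mul_prod_one_sub_X_pow univ ![n₁, n₂, n₃] ?_ ?_
    · simp [Fin.forall_fin_succ, h₁.ne', h₂.ne', h₃.ne']
    · simpa [Fin.prod_univ_three] using heq
  have hp : (1 - X + 2 * X ^ 2 - X ^ 3 : ℤ[X]).leadingCoeff = -1 := by
    rw [leadingCoeff, show (1 - X + 2 * X ^ 2 - X ^ 3 : ℤ[X]).natDegree = 3 by compute_degree!]
    simp [coeff_one, coeff_X]
  have hQlead := hQ Q.natDegree
  rw [← leadingCoeff, hlead, hp] at hQlead
  norm_num at hQlead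
end

section
/- If φ : ℕ → ℕ is nondecreasing and satisfies φ(m+n) ≥ φ(m) for all m,n (monotonicity of the profile), and the generating series ∑ φ(n)Z^n equals P(Z)/((1-Z)(1-Z²)⋯(1-Z^k)) with P ∈ ℤ[Z] and P(1) > 0, then φ(n) grows like a·n^{k-1}: there exist positive reals a,b with a·n^{k-1} ≤ φ(n) ≤ b·n^{k-1} for all sufficiently large n. -/
/-!
Multiplying the denominator `∏_{1 ≤ i ≤ k} (1 - X^i)` by a polynomial `R` with `R(1) > 0` turns it
into `(1 - X)(1 - X^L)^(k-1)` with `L = k!`. The inverse of the latter has `n`-th coefficient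
`C(⌊n/L⌋ + k - 1, k - 1) ~ n^(k-1) / (L^(k-1) (k-1)!)`, so `φ` is the convolution of the finitely
many coefficients of `P R` with a sequence of known growth, and `φ(n) / n^(k-1)` tends to
`P(1) R(1) / (L^(k-1) (k-1)!) > 0`.
-/

open Filter PowerSeries Finset Topology Asymptotics

theorem prod_one_sub_pow_mul_prod_geom_sum_s10 {R ι : Type*} [CommRing R] (x : R) (s : Finset ι)
    (d : ι → ℕ) {L : ℕ} (hd : ∀ i ∈ s, d i ∣ L) :
    (∏ i ∈ s, (1 - x ^ d i)) * ∏ i ∈ s, ∑ t ∈ range (L / d i), (x ^ d i) ^ t =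
      (1 - x ^ L) ^ s.card := by
  rw [← prod_mul_distrib, ← prod_const]
  refine prod_congr rfl fun i hi => ?_
  rw [mul_neg_geom_sum, ← pow_mul, Nat.mul_div_cancel' (hd i hi)]

noncomputable def floorChooseSeries (L j : ℕ) : PowerSeries ℤ :=
  mk fun n => ((n / L + j).choose j : ℤ)

theorem floorChooseSeries_succ_mul_one_sub_X_pow {L : ℕ} (hL : 0 < L) (j : ℕ) :
    floorChooseSeries L (j + 1) * (1 - X ^ L) = floorChooseSeries L j := by
  ext n
  rw [mul_sub, mul_one, map_sub, coeff_mul_X_pow']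
  simp only [floorChooseSeries, coeff_mk]
  split_ifs with hn
  · obtain ⟨m, rfl⟩ := Nat.exists_eq_add_of_le' hn
    rw [Nat.add_div_right _ hL, Nat.add_sub_cancel, show m / L + (j + 1) = m / L + 1 + j by omega,
      ← add_assoc, Nat.choose_succ_succ', Nat.cast_add, add_sub_cancel_right]
  · simp [Nat.div_eq_of_lt (not_le.1 hn)]

theorem floorChooseSeries_mul {L : ℕ} (hL : 0 < L) (j : ℕ) :
    floorChooseSeries L j * ((1 - X) * (1 - X ^ L) ^ j) = 1 := by
  induction j with
  | zero =>
    simp only [floorChooseSeries, Nat.choose_zero_right, Nat.cast_one, pow_zero, mul_one]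
    exact mk_one_mul_one_sub_eq_one ℤ
  | succ j ih =>
    rw [← floorChooseSeries_succ_mul_one_sub_X_pow hL] at ih
    linear_combination ih

theorem tendsto_natDiv_add_div {L : ℕ} (hL : 0 < L) (i j : ℕ) :
    Tendsto (fun n : ℕ => (((n - i) / L + j : ℕ) : ℝ) / n) atTop (𝓝 (1 / L)) := by
  have hL' : (0 : ℝ) < L := by exact_mod_cast hL
  have hlow : Tendsto (fun n : ℕ => 1 / (L : ℝ) - ((i + L) / L : ℝ) / n) atTop (𝓝 (1 / L)) := by
    simpa using tendsto_const_nhds.sub (tendsto_const_div_atTop_nhds_zero_nat ((i + L) / L : ℝ))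
  have hup : Tendsto (fun n : ℕ => 1 / (L : ℝ) + (j : ℝ) / n) atTop (𝓝 (1 / L)) := by
    simpa using tendsto_const_nhds.add (tendsto_const_div_atTop_nhds_zero_nat (j : ℝ))
  refine tendsto_of_tendsto_of_tendsto_of_le_of_le' hlow hup ?_ ?_ <;>
    filter_upwards [eventually_gt_atTop i] with n hn <;>
    have hn' : (0 : ℝ) < n := by exact_mod_cast (i.zero_le.trans_lt hn)
  · have h := Nat.sub_one_lt_floor (((n - i : ℕ) : ℝ) / L)
    rw [Nat.floor_div_eq_div, Nat.cast_sub hn.le] at h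
    have hlin : (1 / (L : ℝ) - ((i + L) / L : ℝ) / n) * n = (n - i) / L - 1 := by
      field_simp; ring
    rw [le_div_iff₀ hn', hlin]
    push_cast
    linarith
  · have h : (((n - i) / L : ℕ) : ℝ) ≤ n / L :=
      (Nat.cast_div_le).trans (by gcongr; exact_mod_cast Nat.sub_le n i)
    rw [div_le_iff₀ hn', add_mul, div_mul_cancel₀ _ hn'.ne', one_div_mul_eq_div]
    push_cast
    linarith

theorem tendsto_choose_natDiv_div_pow {L : ℕ} (hL : 0 < L) (i j : ℕ) :
    Tendsto (fun n : ℕ => ((((n - i) / L + j).choose j : ℕ) : ℝ) / (n : ℝ) ^ j) atTop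
      (𝓝 (1 / ((L : ℝ) ^ j * j.factorial))) := by
  have hf : Tendsto (fun n => (n - i) / L + j) atTop atTop :=
    (tendsto_add_atTop_nat j).comp
      ((Nat.tendsto_div_const_atTop hL.ne').comp (tendsto_sub_atTop_nat i))
  have hequiv := ((isEquivalent_choose j).comp_tendsto hf).div
    (IsEquivalent.refl (u := fun n : ℕ => (n : ℝ) ^ j))
  refine hequiv.symm.tendsto_nhds ?_
  have h := ((tendsto_natDiv_add_div hL i j).pow j).div_const (j.factorial : ℝ)
  rw [div_pow, one_pow, div_div] at h
  refine h.congr' ?_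
  filter_upwards [eventually_gt_atTop 0] with n hn
  simp only [Function.comp_apply, Pi.div_apply, div_pow]
  field_simp

theorem tendsto_coeff_mul_mk_div {Q : Polynomial ℤ} {h : ℕ → ℤ} {w : ℕ → ℝ} {c : ℝ}
    (hh : ∀ i, Tendsto (fun n => (h (n - i) : ℝ) / w n) atTop (𝓝 c)) :
    Tendsto (fun n => ((coeff n ((Q : PowerSeries ℤ) * mk h) : ℤ) : ℝ) / w n) atTop
      (𝓝 (Q.eval 1 * c)) := by
  set D := Q.natDegree
  have hcoeff : ∀ n, D ≤ n →
      coeff n ((Q : PowerSeries ℤ) * mk h) = ∑ i ∈ range (D + 1), Q.coeff i * h (n - i) := by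
    intro n hn
    rw [coeff_mul, Nat.sum_antidiagonal_eq_sum_range_succ_mk]
    simp only [Polynomial.coeff_coe, coeff_mk]
    refine (sum_subset (range_subset_range.2 (by omega)) fun i _ hi => ?_).symm
    rw [Polynomial.coeff_eq_zero_of_natDegree_lt (by simpa using hi), zero_mul]
  have heval : ((Q.eval 1 : ℤ) : ℝ) = ∑ i ∈ range (D + 1), (Q.coeff i : ℝ) := by
    simp [D, Polynomial.eval_eq_sum_range]
  rw [heval, sum_mul]
  refine (tendsto_finsetSum _ fun i _ => (hh i).const_mul (Q.coeff i : ℝ)).congr' ?_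
  filter_upwards [eventually_ge_atTop D] with n hn
  rw [hcoeff n hn, Int.cast_sum, sum_div]
  simp only [Int.cast_mul, mul_div_assoc]

theorem exists_pos_mul_le_and_le_mul_of_tendsto_div {α : Type*} {l : Filter α} {u v : α → ℝ}
    {c : ℝ} (hc : 0 < c) (hv : ∀ᶠ x in l, 0 < v x) (h : Tendsto (fun x => u x / v x) l (𝓝 c)) :
    ∃ a b : ℝ, 0 < a ∧ 0 < b ∧ ∀ᶠ x in l, a * v x ≤ u x ∧ u x ≤ b * v x := by
  refine ⟨c / 2, 2 * c, by positivity, by positivity, ?_⟩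
  filter_upwards [hv, h.eventually (Ioo_mem_nhds (half_lt_self hc) (by linarith : c < 2 * c))]
    with x hvx hx
  exact ⟨(le_div_iff₀ hvx).1 hx.1.le, (div_le_iff₀ hvx).1 hx.2.le⟩

theorem exists_polynomial_mul_prod_one_sub_X_pow (j : ℕ) :
    ∃ R : Polynomial ℤ, 0 < R.eval 1 ∧
      (∏ i ∈ range (j + 1), (1 - (X : PowerSeries ℤ) ^ (i + 1))) * (R : PowerSeries ℤ) =
        (1 - X) * (1 - X ^ (j + 1).factorial) ^ j := by
  have hdvd : ∀ i ∈ range j, i + 2 ∣ (j + 1).factorial := fun i hi =>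
    Nat.dvd_factorial (by omega) (by simp at hi; omega)
  refine ⟨∏ i ∈ range j, ∑ t ∈ range ((j + 1).factorial / (i + 2)), (Polynomial.X ^ (i + 2)) ^ t,
    ?_, ?_⟩
  · simp only [Polynomial.eval_prod, Polynomial.eval_finsetSum, Polynomial.eval_pow,
      Polynomial.eval_X, one_pow, sum_const, card_range, nsmul_eq_mul, mul_one]
    exact prod_pos fun i hi => by
      exact_mod_cast Nat.div_pos (Nat.le_of_dvd (Nat.factorial_pos _) (hdvd i hi)) (by omega)
  · have hcast : ((∏ i ∈ range j, ∑ t ∈ range ((j + 1).factorial / (i + 2)),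
        (Polynomial.X ^ (i + 2)) ^ t : Polynomial ℤ) : PowerSeries ℤ) =
        ∏ i ∈ range j, ∑ t ∈ range ((j + 1).factorial / (i + 2)),
          ((X : PowerSeries ℤ) ^ (i + 2)) ^ t := by
      rw [← Polynomial.coeToPowerSeries.ringHom_apply, map_prod]
      simp_rw [map_sum, map_pow, Polynomial.coeToPowerSeries.ringHom_apply, Polynomial.coe_X]
    rw [hcast, prod_range_succ', mul_comm _ (1 - X ^ (0 + 1)), mul_assoc,
      prod_one_sub_pow_mul_prod_geom_sum_s10 X (range j) (· + 2) hdvd, card_range, zero_add, pow_one]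

theorem polynomial_growth_of_rational_hilbert_series_general
    (k : ℕ) (hk : 0 < k) (φ : ℕ → ℕ)
    (P : Polynomial ℤ)
    (hgen : (PowerSeries.mk fun n => (φ n : ℤ))
        * ∏ i ∈ Finset.range k, (1 - (PowerSeries.X : PowerSeries ℤ) ^ (i + 1))
        = (P : PowerSeries ℤ))
    (hP1 : 0 < P.eval 1) :
    ∃ a b : ℝ, 0 < a ∧ 0 < b ∧
      ∀ᶠ n : ℕ in atTop,
        a * (n : ℝ) ^ (k - 1) ≤ (φ n : ℝ) ∧ (φ n : ℝ) ≤ b * (n : ℝ) ^ (k - 1) := by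
  obtain ⟨j, rfl⟩ := Nat.exists_eq_add_one_of_ne_zero hk.ne'
  obtain ⟨R, hR1, hR⟩ := exists_polynomial_mul_prod_one_sub_X_pow j
  set L := (j + 1).factorial
  set F : PowerSeries ℤ := mk fun n => (φ n : ℤ)
  have hF : F = ↑(P * R) * floorChooseSeries L j := by
    calc F = F * (floorChooseSeries L j * ((1 - X) * (1 - X ^ L) ^ j)) := by
          rw [floorChooseSeries_mul (Nat.factorial_pos _), mul_one]
      _ = (F * ∏ i ∈ range (j + 1), (1 - X ^ (i + 1))) * R * floorChooseSeries L j := by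
          rw [← hR]; ring
      _ = ↑(P * R) * floorChooseSeries L j := by rw [hgen, Polynomial.coe_mul]
  have hlim : Tendsto (fun n => ((coeff n F : ℤ) : ℝ) / (n : ℝ) ^ j) atTop
      (𝓝 (((P * R).eval 1 : ℤ) * (1 / ((L : ℝ) ^ j * j.factorial)))) := by
    rw [hF]
    exact tendsto_coeff_mul_mk_div fun i => by
      simpa using tendsto_choose_natDiv_div_pow (Nat.factorial_pos (j + 1)) i j
  simp only [F, coeff_mk, Int.cast_natCast] at hlim
  have hc : (0 : ℝ) < ((P * R).eval 1 : ℤ) := by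
    rw [Polynomial.eval_mul]; exact_mod_cast mul_pos hP1 hR1
  simpa using exists_pos_mul_le_and_le_mul_of_tendsto_div (by positivity)
    ((eventually_gt_atTop 0).mono fun n hn => by positivity) hlim

theorem polynomial_growth_of_rational_hilbert_series
    (k : ℕ) (hk : 0 < k) (φ : ℕ → ℕ) (hmono : Monotone φ)
    (hmono' : ∀ m n : ℕ, φ m ≤ φ (m + n))
    (P : Polynomial ℤ)
    (hgen : (PowerSeries.mk fun n => (φ n : ℤ))
        * ∏ i ∈ Finset.range k, (1 - (PowerSeries.X : PowerSeries ℤ) ^ (i + 1))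
        = (P : PowerSeries ℤ))
    (hP1 : 0 < P.eval 1) :
    ∃ a b : ℝ, 0 < a ∧ 0 < b ∧
      ∀ᶠ n : ℕ in atTop,
        a * (n : ℝ) ^ (k - 1) ≤ (φ n : ℝ) ∧ (φ n : ℝ) ≤ b * (n : ℝ) ^ (k - 1) :=
  polynomial_growth_of_rational_hilbert_series_general k hk φ P hgen hP1
end

section
/- For every x ∈ E, the union R(x) of all monomorphic parts of a relational structure R containing x is itself a monomorphic part of R. -/
/-- A relational structure on `E`. -/
structure RelStruct (E : Type*) where
  I : Type
  ar : I → ℕ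
  rel : ∀ i : I, (Fin (ar i) → E) → Prop

/-- The substructures induced on two finite subsets are isomorphic. -/
def RelStruct.IndIso {E : Type*} (R : RelStruct E) (A B : Finset E) : Prop :=
  ∃ f : {x // x ∈ A} ≃ {x // x ∈ B},
    ∀ (i : R.I) (v : Fin (R.ar i) → {x // x ∈ A}),
      R.rel i (fun j => (v j : E)) ↔ R.rel i (fun j => (f (v j) : E))

/-- `B` is a monomorphic part of `R`: finite subsets of `E` of the same size which
agree outside of `B` induce isomorphic substructures. -/
def RelStruct.IsMonomorphicPart {E : Type*} (R : RelStruct E) (B : Set E) : Prop :=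
  ∀ A A' : Finset E, A.card = A'.card → (↑A \ B : Set E) = (↑A' \ B : Set E) →
    R.IndIso A A'

private lemma RelStruct.indIso_refl {E : Type*} (R : RelStruct E) (A : Finset E) :
    R.IndIso A A :=
  ⟨Equiv.refl _, fun _ _ => Iff.rfl⟩

private lemma RelStruct.indIso_trans {E : Type*} (R : RelStruct E) {A B C : Finset E}
    (h1 : R.IndIso A B) (h2 : R.IndIso B C) : R.IndIso A C := by
  obtain ⟨f, hf⟩ := h1
  obtain ⟨g, hg⟩ := h2
  exact ⟨f.trans g, fun i v => (hf i v).trans (hg i fun j => f (v j))⟩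

/-- One elementary move inside a single monomorphic part `B`: trade `u ∈ A` for `v ∉ A`. -/
private lemma RelStruct.move {E : Type*} [DecidableEq E] (R : RelStruct E) {B : Set E}
    (hB : R.IsMonomorphicPart B) {A : Finset E} {u v : E}
    (hu : u ∈ A) (hv : v ∉ A) (huB : u ∈ B) (hvB : v ∈ B) :
    R.IndIso A (insert v (A.erase u)) := by
  apply hB
  · have hv' : v ∉ A.erase u := fun h => hv (Finset.mem_of_mem_erase h)
    have hpos : 0 < A.card := Finset.card_pos.mpr ⟨u, hu⟩
    rw [Finset.card_insert_of_notMem hv', Finset.card_erase_of_mem hu]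
    omega
  · ext y
    simp only [Set.mem_diff, Finset.mem_coe, Finset.mem_insert, Finset.mem_erase]
    constructor
    · rintro ⟨hyA, hyB⟩
      exact ⟨Or.inr ⟨fun h => hyB (h ▸ huB), hyA⟩, hyB⟩
    · rintro ⟨rfl | ⟨hyu, hyA⟩, hyB⟩
      · exact absurd hvB hyB
      · exact ⟨hyA, hyB⟩

private lemma RelStruct.key {E : Type*} [DecidableEq E] (R : RelStruct E) (x : E)
    (U : Set E)
    (hmem : ∀ y ∈ U, ∃ B : Set E, R.IsMonomorphicPart B ∧ x ∈ B ∧ y ∈ B ∧ B ⊆ U) :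
    ∀ (n : ℕ) (A A' : Finset E), (A \ A').card = n → A.card = A'.card →
      (↑A \ U : Set E) = (↑A' \ U : Set E) → R.IndIso A A' := by
  intro n
  induction n with
  | zero =>
    intro A A' hd hc _
    have hsub : A ⊆ A' := by
      intro a ha
      by_contra h
      exact absurd (Finset.card_eq_zero.mp hd ▸ Finset.mem_sdiff.mpr ⟨ha, h⟩)
        (Finset.notMem_empty a)
    have : A = A' := Finset.eq_of_subset_of_card_le hsub (le_of_eq hc.symm)
    exact this ▸ R.indIso_refl A
  | succ n ih =>
    intro A A' hd hc hU
    -- both difference sets are nonempty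
    have hdd : (A' \ A).card = n + 1 := by
      have h1 := Finset.card_sdiff_add_card_inter A A'
      have h2 := Finset.card_sdiff_add_card_inter A' A
      rw [Finset.inter_comm] at h2
      omega
    obtain ⟨v, hv⟩ := Finset.card_pos.mp (by omega : 0 < (A' \ A).card)
    obtain ⟨u, hu⟩ := Finset.card_pos.mp (by omega : 0 < (A \ A').card)
    rw [Finset.mem_sdiff] at hv hu
    obtain ⟨hvA', hvA⟩ := hv
    obtain ⟨huA, huA'⟩ := hu
    -- u and v lie in U
    have huU : u ∈ U := by
      by_contra h
      have : (u : E) ∈ (↑A' \ U : Set E) := hU ▸ ⟨huA, h⟩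
      exact huA' this.1
    have hvU : v ∈ U := by
      by_contra h
      have : (v : E) ∈ (↑A \ U : Set E) := hU.symm ▸ ⟨hvA', h⟩
      exact hvA this.1
    obtain ⟨Bu, hBu, hxBu, huBu, hBuU⟩ := hmem u huU
    obtain ⟨Bv, hBv, hxBv, hvBv, hBvU⟩ := hmem v hvU
    -- the one-step target
    set A₂ : Finset E := insert v (A.erase u) with hA₂
    have hvAe : v ∉ A.erase u := fun h => hvA (Finset.mem_of_mem_erase h)
    have hcard2 : A₂.card = A'.card := by
      rw [hA₂, Finset.card_insert_of_notMem hvAe, Finset.card_erase_of_mem huA]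
      have hpos : 0 < A.card := Finset.card_pos.mpr ⟨u, huA⟩
      omega
    have hdiff2 : A₂ \ A' = (A \ A').erase u := by
      ext a
      simp only [hA₂, Finset.mem_sdiff, Finset.mem_insert, Finset.mem_erase]
      constructor
      · rintro ⟨rfl | ⟨hau, haA⟩, haA'⟩
        · exact absurd hvA' haA'
        · exact ⟨hau, haA, haA'⟩
      · rintro ⟨hau, haA, haA'⟩
        exact ⟨Or.inr ⟨hau, haA⟩, haA'⟩
    have hd2 : (A₂ \ A').card = n := by
      rw [hdiff2, Finset.card_erase_of_mem (Finset.mem_sdiff.mpr ⟨huA, huA'⟩), hd]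
      omega
    have hU2 : (↑A₂ \ U : Set E) = (↑A' \ U : Set E) := by
      rw [← hU]
      ext a
      simp only [hA₂, Set.mem_diff, Finset.mem_coe, Finset.mem_insert, Finset.mem_erase]
      constructor
      · rintro ⟨rfl | ⟨hau, haA⟩, haU⟩
        · exact absurd hvU haU
        · exact ⟨haA, haU⟩
      · rintro ⟨haA, haU⟩
        exact ⟨Or.inr ⟨fun h => haU (h ▸ huU), haA⟩, haU⟩
    have hrest : R.IndIso A₂ A' := ih A₂ A' hd2 hcard2 hU2
    -- it remains to show R.IndIso A A₂, by at most two elementary moves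
    refine R.indIso_trans ?_ hrest
    by_cases huBv : u ∈ Bv
    · exact R.move hBv huA hvA huBv hvBv
    by_cases hvBu : v ∈ Bu
    · exact R.move hBu huA hvA huBu hvBu
    -- now u ≠ x and v ≠ x
    have hux : u ≠ x := fun h => huBv (h ▸ hxBv)
    have hvx : v ≠ x := fun h => hvBu (h ▸ hxBu)
    by_cases hxA : x ∈ A
    · -- A → insert v (A.erase x) (via Bv) → insert x (· .erase u) = A₂ (via Bu)
      have step1 : R.IndIso A (insert v (A.erase x)) := R.move hBv hxA hvA hxBv hvBv
      have huA1 : u ∈ insert v (A.erase x) :=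
        Finset.mem_insert_of_mem (Finset.mem_erase.mpr ⟨hux, huA⟩)
      have hxA1 : x ∉ insert v (A.erase x) := by
        simp only [Finset.mem_insert, Finset.mem_erase]
        rintro (h | ⟨h, _⟩)
        · exact hvx h.symm
        · exact h rfl
      have step2 : R.IndIso (insert v (A.erase x))
          (insert x ((insert v (A.erase x)).erase u)) :=
        R.move hBu huA1 hxA1 huBu hxBu
      have heq : insert x ((insert v (A.erase x)).erase u) = A₂ := by
        ext a
        simp only [hA₂, Finset.mem_insert, Finset.mem_erase]
        constructor
        · rintro (rfl | ⟨hau, rfl | ⟨hax, haA⟩⟩)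
          · exact Or.inr ⟨Ne.symm hux, hxA⟩
          · exact Or.inl rfl
          · exact Or.inr ⟨hau, haA⟩
        · rintro (rfl | ⟨hau, haA⟩)
          · exact Or.inr ⟨fun h => hvA (by rw [h]; exact huA), Or.inl rfl⟩
          · by_cases hax : a = x
            · exact Or.inl hax
            · exact Or.inr ⟨hau, Or.inr ⟨hax, haA⟩⟩
      exact R.indIso_trans step1 (heq ▸ step2)
    · -- A → insert x (A.erase u) (via Bu) → insert v (· .erase x) = A₂ (via Bv)
      have step1 : R.IndIso A (insert x (A.erase u)) := R.move hBu huA hxA huBu hxBu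
      have hxA1 : x ∈ insert x (A.erase u) := Finset.mem_insert_self _ _
      have hvA1 : v ∉ insert x (A.erase u) := by
        simp only [Finset.mem_insert, Finset.mem_erase]
        rintro (h | ⟨_, h⟩)
        · exact hvx h
        · exact hvA h
      have step2 : R.IndIso (insert x (A.erase u))
          (insert v ((insert x (A.erase u)).erase x)) :=
        R.move hBv hxA1 hvA1 hxBv hvBv
      have heq : insert v ((insert x (A.erase u)).erase x) = A₂ := by
        have hxe : x ∉ A.erase u := fun h => hxA (Finset.mem_of_mem_erase h)
        rw [Finset.erase_insert hxe]
      exact R.indIso_trans step1 (heq ▸ step2)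

theorem union_of_monomorphic_parts_containing_point
    {E : Type*} (R : RelStruct E) (x : E) :
    R.IsMonomorphicPart (⋃₀ {B : Set E | R.IsMonomorphicPart B ∧ x ∈ B}) := by
  classical
  intro A A' hcard hdiff
  exact R.key x _ (fun y hy => by
    obtain ⟨B, ⟨hB, hxB⟩, hyB⟩ := hy
    exact ⟨B, hB, hxB, hyB, fun z hz => ⟨B, ⟨hB, hxB⟩, hz⟩⟩)
    (A \ A').card A A' rfl hcard hdiff
end

section
/- If B and B' are monomorphic parts of a relational structure R with B ∩ B' ≠ ∅, then B ∪ B' is a monomorphic part of R. -/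
namespace RelStruct

variable {E : Type*} [DecidableEq E] (R : RelStruct E)

omit [DecidableEq E] in
lemma indIso_refl_s15 (A : Finset E) : R.IndIso A A :=
  ⟨Equiv.refl _, fun _ _ => Iff.rfl⟩

omit [DecidableEq E] in
lemma indIso_trans_s15 {A A' A'' : Finset E} (h : R.IndIso A A') (h' : R.IndIso A' A'') :
    R.IndIso A A'' := by
  obtain ⟨f, hf⟩ := h
  obtain ⟨g, hg⟩ := h'
  exact ⟨f.trans g, fun i v => (hf i v).trans (hg i fun j => f (v j))⟩

/-- Exchanging an element of a monomorphic part `C` for another element of `C`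
yields an isomorphic induced substructure. -/
lemma oneStep {C : Set E} (hC : R.IsMonomorphicPart C) {x y : E}
    (hx : x ∈ C) (hy : y ∈ C) {F : Finset E} (hxF : x ∈ F) (hyF : y ∉ F) :
    R.IndIso F (insert y (F.erase x)) := by
  have hpos : 0 < F.card := Finset.card_pos.mpr ⟨x, hxF⟩
  apply hC
  · rw [Finset.card_insert_of_notMem (fun h => hyF (Finset.mem_of_mem_erase h)),
      Finset.card_erase_of_mem hxF]
    omega
  · ext z
    simp only [Set.mem_diff, Finset.coe_insert, Set.mem_insert_iff, Finset.coe_erase,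
      Set.mem_singleton_iff, Finset.mem_coe]
    constructor
    · rintro ⟨hzF, hzC⟩
      exact ⟨Or.inr ⟨hzF, fun h => hzC (h ▸ hx)⟩, hzC⟩
    · rintro ⟨h, hzC⟩
      rcases h with rfl | ⟨hzF, _⟩
      · exact absurd hy hzC
      · exact ⟨hzF, hzC⟩

/-- The mixed exchange: `x ∈ B`, `y ∈ B'`, using a common point `a ∈ B ∩ B'`. -/
lemma mixedStep {B B' : Set E} (hB : R.IsMonomorphicPart B) (hB' : R.IsMonomorphicPart B')
    {a : E} (haB : a ∈ B) (haB' : a ∈ B') {x y : E} (hxB : x ∈ B) (hyB' : y ∈ B')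
    {F : Finset E} (hxF : x ∈ F) (hyF : y ∉ F) :
    R.IndIso F (insert y (F.erase x)) := by
  by_cases hax : a = x
  · exact R.oneStep hB' (hax ▸ haB') hyB' hxF hyF
  by_cases hay : a = y
  · exact R.oneStep hB hxB (hay ▸ haB) hxF hyF
  have hxy : x ≠ y := fun h => hyF (h ▸ hxF)
  by_cases haF : a ∈ F
  · -- go F → insert y (F.erase a) → insert y (F.erase x)
    have s1 : R.IndIso F (insert y (F.erase a)) := R.oneStep hB' haB' hyB' haF hyF
    have hxG : x ∈ insert y (F.erase a) :=
      Finset.mem_insert_of_mem (Finset.mem_erase.mpr ⟨fun h => hax h.symm, hxF⟩)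
    have haG : a ∉ insert y (F.erase a) := by
      simp [Finset.mem_insert, Finset.mem_erase, hay]
    have s2 : R.IndIso (insert y (F.erase a)) (insert a ((insert y (F.erase a)).erase x)) :=
      R.oneStep hB hxB haB hxG haG
    have key : insert a ((insert y (F.erase a)).erase x) = insert y (F.erase x) := by
      ext z
      simp only [Finset.mem_insert, Finset.mem_erase]
      constructor
      · rintro (rfl | ⟨hzx, (rfl | ⟨hza, hzF⟩)⟩)
        · exact Or.inr ⟨fun h => hax h, haF⟩
        · exact Or.inl rfl
        · exact Or.inr ⟨hzx, hzF⟩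
      · rintro (rfl | ⟨hzx, hzF⟩)
        · exact Or.inr ⟨fun h => hxy h.symm, Or.inl rfl⟩
        · by_cases hza : z = a
          · exact Or.inl hza
          · exact Or.inr ⟨hzx, Or.inr ⟨hza, hzF⟩⟩
    rw [key] at s2
    exact R.indIso_trans_s15 s1 s2
  · -- go F → insert a (F.erase x) → insert y (F.erase x)
    have s1 : R.IndIso F (insert a (F.erase x)) := R.oneStep hB hxB haB hxF haF
    have haG : a ∈ insert a (F.erase x) := Finset.mem_insert_self _ _
    have hyG : y ∉ insert a (F.erase x) := by
      simp only [Finset.mem_insert, Finset.mem_erase]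
      rintro (rfl | ⟨_, hzF⟩)
      · exact hay rfl
      · exact hyF hzF
    have s2 : R.IndIso (insert a (F.erase x)) (insert y ((insert a (F.erase x)).erase a)) :=
      R.oneStep hB' haB' hyB' haG hyG
    have key : (insert a (F.erase x)).erase a = F.erase x :=
      Finset.erase_insert (by simp [Finset.mem_erase, haF])
    rw [key] at s2
    exact R.indIso_trans_s15 s1 s2

end RelStruct

theorem union_of_intersecting_monomorphic_parts
    {E : Type*} (R : RelStruct E) (B B' : Set E)
    (hB : R.IsMonomorphicPart B) (hB' : R.IsMonomorphicPart B')
    (hne : (B ∩ B').Nonempty) :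
    R.IsMonomorphicPart (B ∪ B') := by
  classical
  obtain ⟨a, haB, haB'⟩ := hne
  -- exchange lemma for x, y ∈ B ∪ B'
  have exchange : ∀ {x y : E} {F : Finset E}, x ∈ B ∪ B' → y ∈ B ∪ B' → x ∈ F → y ∉ F →
      R.IndIso F (insert y (F.erase x)) := by
    rintro x y F (hx | hx) (hy | hy) hxF hyF
    · exact R.oneStep hB hx hy hxF hyF
    · exact R.mixedStep hB hB' haB haB' hx hy hxF hyF
    · exact R.mixedStep hB' hB haB' haB hx hy hxF hyF
    · exact R.oneStep hB' hx hy hxF hyF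
  suffices h : ∀ n (A A' : Finset E), (A \ A').card = n → A.card = A'.card →
      (↑A \ (B ∪ B') : Set E) = (↑A' \ (B ∪ B') : Set E) → R.IndIso A A' by
    intro A A' hcard hout
    exact h _ A A' rfl hcard hout
  intro n
  induction n using Nat.strong_induction_on with
  | _ n ih =>
    intro A A' hn hcard hout
    by_cases hAA : A = A'
    · exact hAA ▸ R.indIso_refl_s15 A
    · have hdne : (A \ A').Nonempty := by
        rw [Finset.sdiff_nonempty]
        intro hsub
        exact hAA (Finset.eq_of_subset_of_card_le hsub (le_of_eq hcard.symm))
      have hdne' : (A' \ A).Nonempty := by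
        rw [Finset.sdiff_nonempty]
        intro hsub
        exact hAA (Finset.eq_of_subset_of_card_le hsub (le_of_eq hcard)).symm
      obtain ⟨x, hx⟩ := hdne
      obtain ⟨y, hy⟩ := hdne'
      rw [Finset.mem_sdiff] at hx hy
      have hxU : x ∈ B ∪ B' := by
        by_contra hxU
        have : x ∈ (↑A \ (B ∪ B') : Set E) := ⟨hx.1, hxU⟩
        rw [hout] at this
        exact hx.2 this.1
      have hyU : y ∈ B ∪ B' := by
        by_contra hyU
        have : y ∈ (↑A' \ (B ∪ B') : Set E) := ⟨hy.1, hyU⟩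
        rw [← hout] at this
        exact hy.2 this.1
      set G := insert y (A.erase x) with hG
      have s1 : R.IndIso A G := exchange hxU hyU hx.1 hy.2
      have hGA' : G \ A' = (A \ A').erase x := by
        ext z
        simp only [hG, Finset.mem_sdiff, Finset.mem_insert, Finset.mem_erase]
        constructor
        · rintro ⟨rfl | ⟨hzx, hzA⟩, hzA'⟩
          · exact absurd hy.1 hzA'
          · exact ⟨hzx, hzA, hzA'⟩
        · rintro ⟨hzx, hzA, hzA'⟩
          exact ⟨Or.inr ⟨hzx, hzA⟩, hzA'⟩
      have hcardlt : (G \ A').card < n := by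
        rw [hGA', Finset.card_erase_of_mem (Finset.mem_sdiff.mpr hx), hn]
        have : 0 < (A \ A').card := Finset.card_pos.mpr ⟨x, Finset.mem_sdiff.mpr hx⟩
        omega
      have hGcard : G.card = A'.card := by
        rw [hG, Finset.card_insert_of_notMem (fun h => hy.2 (Finset.mem_of_mem_erase h)),
          Finset.card_erase_of_mem hx.1]
        have : 0 < A.card := Finset.card_pos.mpr ⟨x, hx.1⟩
        omega
      have hGout : (↑G \ (B ∪ B') : Set E) = (↑A' \ (B ∪ B') : Set E) := by
        rw [← hout]
        ext z
        simp only [hG, Set.mem_diff, Finset.coe_insert, Set.mem_insert_iff,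
          Finset.coe_erase, Set.mem_singleton_iff, Finset.mem_coe]
        constructor
        · rintro ⟨rfl | ⟨hzA, _⟩, hzU⟩
          · exact absurd hyU hzU
          · exact ⟨hzA, hzU⟩
        · rintro ⟨hzA, hzU⟩
          exact ⟨Or.inr ⟨hzA, fun h => hzU (h ▸ hxU)⟩, hzU⟩
      exact R.indIso_trans_s15 s1 (ih _ hcardlt G A' rfl hGcard hGout)
end

section
/- In any tournament, a monomorphic part of size at least 4 induces an acyclic (i.e., transitive) subtournament. -/
/-- The subtournaments induced on two finite subsets are isomorphic. -/
def TourIndIso {E : Type*} (r : E → E → Prop) (A B : Finset E) : Prop :=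
  ∃ f : {x // x ∈ A} ≃ {x // x ∈ B},
    ∀ a b : {x // x ∈ A}, r (a : E) (b : E) ↔ r (f a : E) (f b : E)

/-- `B` is a monomorphic part: finite subsets of the same size agreeing outside `B`
induce isomorphic subtournaments. -/
def TourIsMonomorphicPart {E : Type*} (r : E → E → Prop) (B : Set E) : Prop :=
  ∀ A A' : Finset E, A.card = A'.card → (↑A \ B : Set E) = (↑A' \ B : Set E) →
    TourIndIso r A A'

theorem monomorphic_part_of_tournament_acyclic
    {E : Type*} (r : E → E → Prop)
    (hirr : ∀ x : E, ¬ r x x)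
    (htotal : ∀ x y : E, x ≠ y → (r x y ↔ ¬ r y x))
    (B : Set E) (hB : TourIsMonomorphicPart r B)
    (hcard : ∃ s : Finset E, ↑s ⊆ B ∧ s.card = 4) :
    ∀ a ∈ B, ∀ b ∈ B, ∀ c ∈ B, r a b → r b c → r a c := by
  classical
  obtain ⟨s, hsub, hs4⟩ := hcard
  intro a ha b hb c hc hab hbc
  by_contra hac
  have hne_ab : a ≠ b := fun h => hirr a (h ▸ hab)
  have hne_bc : b ≠ c := fun h => hirr b (h ▸ hbc)
  have hne_ac : a ≠ c := by
    intro h; subst h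
    exact (htotal a b hne_ab).mp hab hbc
  have hca : r c a := (htotal c a (Ne.symm hne_ac)).mpr hac
  -- every 3-element subset of B is a 3-cycle
  have cyc : ∀ x ∈ B, ∀ y ∈ B, ∀ z ∈ B, x ≠ y → y ≠ z → x ≠ z →
      (r x y ∧ r y z ∧ r z x) ∨ (r y x ∧ r x z ∧ r z y) := by
    intro x hx y hy z hz hxy hyz hxz
    have hcard3 : ({a, b, c} : Finset E).card = ({x, y, z} : Finset E).card := by
      rw [Finset.card_insert_of_notMem (by simp [hne_ab, hne_ac]),
        Finset.card_insert_of_notMem (by simp [hne_bc]), Finset.card_singleton,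
        Finset.card_insert_of_notMem (by simp [hxy, hxz]),
        Finset.card_insert_of_notMem (by simp [hyz]), Finset.card_singleton]
    have hsub1 : (↑({a, b, c} : Finset E) : Set E) ⊆ B := by
      intro w hw
      simp only [Finset.coe_insert, Finset.coe_singleton, Set.mem_insert_iff,
        Set.mem_singleton_iff] at hw
      rcases hw with h | h | h <;> subst h <;> assumption
    have hsub2 : (↑({x, y, z} : Finset E) : Set E) ⊆ B := by
      intro w hw
      simp only [Finset.coe_insert, Finset.coe_singleton, Set.mem_insert_iff,
        Set.mem_singleton_iff] at hw
      rcases hw with h | h | h <;> subst h <;> assumption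
    have hdiff : (↑({a, b, c} : Finset E) \ B : Set E) = (↑({x, y, z} : Finset E) \ B : Set E) := by
      rw [Set.diff_eq_empty.mpr hsub1, Set.diff_eq_empty.mpr hsub2]
    obtain ⟨f, hf⟩ := hB {a, b, c} {x, y, z} hcard3 hdiff
    set sa : {w // w ∈ ({a, b, c} : Finset E)} := ⟨a, by simp⟩ with hsa
    set sb : {w // w ∈ ({a, b, c} : Finset E)} := ⟨b, by simp⟩ with hsb
    set sc : {w // w ∈ ({a, b, c} : Finset E)} := ⟨c, by simp⟩ with hsc
    have r1 : r (f sa : E) (f sb : E) := (hf sa sb).mp hab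
    have r2 : r (f sb : E) (f sc : E) := (hf sb sc).mp hbc
    have r3 : r (f sc : E) (f sa : E) := (hf sc sa).mp hca
    have hd1 : (f sa : E) ≠ (f sb : E) := by
      intro h
      exact hne_ab (congrArg Subtype.val (f.injective (Subtype.ext h)))
    have hd2 : (f sb : E) ≠ (f sc : E) := by
      intro h
      exact hne_bc (congrArg Subtype.val (f.injective (Subtype.ext h)))
    have hd3 : (f sa : E) ≠ (f sc : E) := by
      intro h
      exact hne_ac (congrArg Subtype.val (f.injective (Subtype.ext h)))
    have hpa : (f sa : E) = x ∨ (f sa : E) = y ∨ (f sa : E) = z := by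
      have h := (f sa).2
      simp only [Finset.mem_insert, Finset.mem_singleton] at h; exact h
    have hpb : (f sb : E) = x ∨ (f sb : E) = y ∨ (f sb : E) = z := by
      have h := (f sb).2
      simp only [Finset.mem_insert, Finset.mem_singleton] at h; exact h
    have hpc : (f sc : E) = x ∨ (f sc : E) = y ∨ (f sc : E) = z := by
      have h := (f sc).2
      simp only [Finset.mem_insert, Finset.mem_singleton] at h; exact h
    rcases hpa with h1 | h1 | h1 <;> rcases hpb with h2 | h2 | h2 <;>
      rcases hpc with h3 | h3 | h3 <;>
      rw [h1] at r1 r3 hd1 hd3 <;> rw [h2] at r1 r2 hd1 hd2 <;>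
      rw [h3] at r2 r3 hd2 hd3 <;> tauto
  -- extract 4 distinct elements of s
  have hp0 : 0 < s.card := by omega
  obtain ⟨p, hp⟩ := Finset.card_pos.mp hp0
  have h3 : (s.erase p).card = 3 := by rw [Finset.card_erase_of_mem hp, hs4]
  obtain ⟨q, u, v, hqu, hqv, huv, heq⟩ := Finset.card_eq_three.mp h3
  have hq : q ∈ s.erase p := by rw [heq]; simp
  have hu : u ∈ s.erase p := by rw [heq]; simp
  have hv : v ∈ s.erase p := by rw [heq]; simp
  have hpB : p ∈ B := hsub hp
  have hqB : q ∈ B := hsub (Finset.mem_of_mem_erase hq)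
  have huB : u ∈ B := hsub (Finset.mem_of_mem_erase hu)
  have hvB : v ∈ B := hsub (Finset.mem_of_mem_erase hv)
  have hpq : p ≠ q := fun h => Finset.ne_of_mem_erase hq h.symm
  have hpu : p ≠ u := fun h => Finset.ne_of_mem_erase hu h.symm
  have hpv : p ≠ v := fun h => Finset.ne_of_mem_erase hv h.symm
  rcases cyc p hpB q hqB u huB hpq hqu hpu with ⟨h1, h2, h3'⟩ | ⟨h1, h2, h3'⟩
  · rcases cyc p hpB q hqB v hvB hpq hqv hpv with ⟨g1, g2, g3⟩ | ⟨g1, g2, g3⟩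
    · rcases cyc q hqB u huB v hvB hqu huv hqv with ⟨k1, k2, k3⟩ | ⟨k1, k2, k3⟩
      · exact (htotal q v hqv).mp g2 k3
      · exact (htotal q u hqu).mp h2 k1
    · exact (htotal p q hpq).mp h1 g1
  · rcases cyc p hpB q hqB v hvB hpq hqv hpv with ⟨g1, g2, g3⟩ | ⟨g1, g2, g3⟩
    · exact (htotal q p hpq.symm).mp h1 g1
    · rcases cyc q hqB u huB v hvB hqu huv hqv with ⟨k1, k2, k3⟩ | ⟨k1, k2, k3⟩
      · exact (htotal u q hqu.symm).mp h3' k1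
      · exact (htotal q v hqv).mp k2 g3
end

section
/- If a quasi-ordered set P admits an order-embedding of its lattice of final segments into the lattice of ideals of a Noetherian ring A (ordered by inclusion), then P is well-quasi-ordered. -/
theorem wqo_of_finalSegments_embed_in_ideals
    {P A : Type*} [Preorder P] [CommRing A] [IsNoetherianRing A]
    (ι : {F : Set P // IsUpperSet F} → Ideal A)
    (hι : ∀ F F' : {F : Set P // IsUpperSet F}, F.1 ⊆ F'.1 ↔ ι F ≤ ι F') :
    ∀ f : ℕ → P, ∃ m n : ℕ, m < n ∧ f m ≤ f n := by
  intro f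
  by_contra h
  push_neg at h
  -- G n : upper set generated by f 0, ..., f n
  set G : ℕ → {F : Set P // IsUpperSet F} :=
    fun n => ⟨{x | ∃ i ≤ n, f i ≤ x}, by
      intro a b hab ⟨i, hi, hfi⟩
      exact ⟨i, hi, hfi.trans hab⟩⟩ with hG
  have hmono : Monotone (fun n => ι (G n)) := by
    intro m n hmn
    rw [← hι]
    rintro x ⟨i, hi, hfi⟩
    exact ⟨i, hi.trans hmn, hfi⟩
  obtain ⟨N, hN⟩ := monotone_stabilizes_iff_noetherian.mpr
    (inferInstance : IsNoetherian A A) ⟨fun n => ι (G n), hmono⟩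
  have heq : ι (G (N + 1)) ≤ ι (G N) := by
    have := hN (N + 1) (Nat.le_succ N)
    simp only [OrderHom.coe_mk] at this
    exact le_of_eq this.symm
  rw [← hι] at heq
  obtain ⟨i, hi, hfi⟩ := heq ⟨N + 1, le_refl _, le_refl _⟩
  exact h i (N + 1) (Nat.lt_succ_of_le hi) hfi
end
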